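/- arXiv:2010.08664 — 6 statements merged into one kernel-verified Lean document; each statement's English description precedes it below -/
import Mathlib

section
/- A simple digraph G is a circular-arc catch digraph if and only if there exists an ordering of its vertices with respect to which the augmented adjacency matrix of G (the adjacency matrix with 1's placed on the diagonal) satisfies the circular ones property along rows, i.e., in every row the entries equal to 1 occur circularly consecutively. -/
/-- Membership in the closed clockwise circular arc starting at `a` of length `ℓ`
on a circle of circumference 1 (points are reals modulo 1). -/
def arcMem (a ℓ x : ℝ) : Prop := Int.fract (x - a) ≤ ℓ

/-- The set of points of the circle (reals, modulo 1) lying on the arc. -/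
def arcSet (a ℓ : ℝ) : Set ℝ := {x | arcMem a ℓ x}

/-- `E` is a circular-arc catch digraph: each vertex `v` carries a circular arc
(start `a v`, length `ℓ v`) and a point `p v` inside its own arc, and
`E u v` iff `u ≠ v` and the point of `v` lies in the arc of `u`. -/
def IsCACatchDigraph {V : Type*} (E : V → V → Prop) : Prop :=
  ∃ a ℓ p : V → ℝ, (∀ v, arcMem (a v) (ℓ v) (p v)) ∧
    ∀ u v, E u v ↔ u ≠ v ∧ arcMem (a u) (ℓ u) (p v)

/-- Proper circular-arc catch digraph: as above, with no arc properly contained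
in another. -/
def IsProperCACatchDigraph {V : Type*} (E : V → V → Prop) : Prop :=
  ∃ a ℓ p : V → ℝ, (∀ v, arcMem (a v) (ℓ v) (p v)) ∧
    (∀ u v : V, ¬ arcSet (a u) (ℓ u) ⊂ arcSet (a v) (ℓ v)) ∧
    ∀ u v, E u v ↔ u ≠ v ∧ arcMem (a u) (ℓ u) (p v)

/-- A digraph is oriented: no pair of vertices has edges in both directions. -/
def Oriented {V : Type*} (E : V → V → Prop) : Prop := ∀ u v, E u v → ¬ E v u

/-- A subset of `Fin n` is a circular (cyclically consecutive) block. -/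
def CircBlock {n : ℕ} (S : Set (Fin n)) : Prop :=
  S = ∅ ∨ ∃ a b : Fin n, S = {i | i - a ≤ b - a}



private lemma finSubVal {n : ℕ} (i a : Fin n) :
    ((i - a : Fin n) : ℕ) = if a.val ≤ i.val then i.val - a.val else i.val + n - a.val := by
  rw [Fin.sub_def]
  have hi := i.isLt
  have ha := a.isLt
  show (n - a.val + i.val) % n = _
  split_ifs with h
  · have e : n - a.val + i.val = n + (i.val - a.val) := by omega
    rw [e, Nat.add_mod_left, Nat.mod_eq_of_lt (by omega)]
  · rw [Nat.mod_eq_of_lt (by omega)]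
    omega

private lemma circBlock_Icc {n : ℕ} (a b : Fin n) : CircBlock {i | a ≤ i ∧ i ≤ b} := by
  by_cases hab : a ≤ b
  · refine Or.inr ⟨a, b, ?_⟩
    ext i
    have hi := i.isLt
    have ha := a.isLt
    have hb := b.isLt
    rw [Fin.le_def] at hab
    simp only [Set.mem_setOf_eq, Fin.le_def, finSubVal]
    split_ifs <;> omega
  · left
    ext i
    simp only [Set.mem_setOf_eq, Set.mem_empty_iff_false, iff_false]
    rintro ⟨h1, h2⟩
    exact hab (h1.trans h2)

private lemma circBlock_wrap {n : ℕ} (a b : Fin n) (h : b < a) :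
    CircBlock {i | a ≤ i ∨ i ≤ b} := by
  refine Or.inr ⟨a, b, ?_⟩
  ext i
  have hi := i.isLt
  have ha := a.isLt
  have hb := b.isLt
  rw [Fin.lt_def] at h
  simp only [Set.mem_setOf_eq, Fin.le_def, finSubVal]
  split_ifs <;> omega

private lemma circBlock_univ {n : ℕ} (hn : 0 < n) : CircBlock (Set.univ : Set (Fin n)) := by
  refine Or.inr ⟨⟨0, hn⟩, ⟨n - 1, by omega⟩, ?_⟩
  ext i
  have hi := i.isLt
  simp only [Set.mem_univ, true_iff, Set.mem_setOf_eq, Fin.le_def, finSubVal]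
  split_ifs <;> omega

private lemma circBlock_of_convex {n : ℕ} (S : Set (Fin n))
    (h : ∀ ⦃i j k : Fin n⦄, i ∈ S → k ∈ S → i ≤ j → j ≤ k → j ∈ S) : CircBlock S := by
  classical
  rcases S.eq_empty_or_nonempty with hS | hS
  · exact Or.inl hS
  · have hF : S.toFinset.Nonempty := by
      rwa [Set.toFinset_nonempty]
    set a := S.toFinset.min' hF with ha
    set b := S.toFinset.max' hF with hb
    have haS : a ∈ S := by
      have := S.toFinset.min'_mem hF
      rwa [Set.mem_toFinset] at this
    have hbS : b ∈ S := by
      have := S.toFinset.max'_mem hF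
      rwa [Set.mem_toFinset] at this
    have : S = {i | a ≤ i ∧ i ≤ b} := by
      ext i
      constructor
      · intro hiS
        have hi' : i ∈ S.toFinset := Set.mem_toFinset.mpr hiS
        exact ⟨S.toFinset.min'_le i hi', S.toFinset.le_max' i hi'⟩
      · rintro ⟨h1, h2⟩
        exact h haS hbS h1 h2
    rw [this]
    exact circBlock_Icc a b

private lemma circBlock_inter_mono {n : ℕ} (q : Fin n → ℝ) (hq : Monotone q) (t1 t2 : ℝ) :
    CircBlock {j | t1 ≤ q j ∧ q j ≤ t2} := by
  refine circBlock_of_convex _ ?_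
  rintro i j k ⟨hi1, hi2⟩ ⟨hk1, hk2⟩ hij hjk
  exact ⟨hi1.trans (hq hij), (hq hjk).trans hk2⟩

private lemma circBlock_union_mono {n : ℕ} (q : Fin n → ℝ) (hq : Monotone q) (t1 t2 : ℝ) :
    CircBlock {j | t1 ≤ q j ∨ q j ≤ t2} := by
  classical
  set S : Set (Fin n) := {j | t1 ≤ q j ∨ q j ≤ t2} with hSdef
  rcases S.eq_empty_or_nonempty with hS | hS
  · exact Or.inl hS
  by_cases ht : t1 ≤ t2
  · have : S = Set.univ := by
      apply Set.eq_univ_iff_forall.mpr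
      intro j
      rcases le_or_gt (q j) t2 with h | h
      · exact Or.inr h
      · exact Or.inl (ht.trans h.le)
    rw [this]
    obtain ⟨j, -⟩ := hS
    exact circBlock_univ j.pos
  push_neg at ht
  set FA : Finset (Fin n) := Finset.univ.filter (fun j => t1 ≤ q j) with hFA
  set FB : Finset (Fin n) := Finset.univ.filter (fun j => q j ≤ t2) with hFB
  by_cases hA : FA.Nonempty
  · by_cases hB : FB.Nonempty
    · set a := FA.min' hA with ha
      set b := FB.max' hB with hb
      have haA : t1 ≤ q a := by
        have := FA.min'_mem hA
        simp [hFA] at this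
        exact this
      have hbB : q b ≤ t2 := by
        have := FB.max'_mem hB
        simp [hFB] at this
        exact this
      have hba : b < a := by
        by_contra hcon
        push_neg at hcon
        have := hq hcon
        linarith
      have : S = {i | a ≤ i ∨ i ≤ b} := by
        ext j
        constructor
        · rintro (h | h)
          · exact Or.inl (FA.min'_le j (by simp [hFA, h]))
          · exact Or.inr (FB.le_max' j (by simp [hFB, h]))
        · rintro (h | h)
          · exact Or.inl (haA.trans (hq h))
          · exact Or.inr ((hq h).trans hbB)
      rw [this]
      exact circBlock_wrap a b hba
    · -- FB empty : no j with q j ≤ t2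
      have hB' : ∀ j, ¬ q j ≤ t2 := by
        intro j hj
        exact hB ⟨j, by simp [hFB, hj]⟩
      refine circBlock_of_convex _ ?_
      rintro i j k hi hk hij hjk
      rcases hi with h | h
      · exact Or.inl (h.trans (hq hij))
      · exact absurd h (hB' i)
  · have hA' : ∀ j, ¬ t1 ≤ q j := by
      intro j hj
      exact hA ⟨j, by simp [hFA, hj]⟩
    refine circBlock_of_convex _ ?_
    rintro i j k hi hk hij hjk
    rcases hk with h | h
    · exact absurd h (hA' k)
    · exact Or.inr ((hq hjk).trans h)

private lemma fract_val_div {n : ℕ} (hn : 0 < n) (i j : Fin n) :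
    Int.fract ((i.val : ℝ) / n - (j.val : ℝ) / n) = ((i - j : Fin n).val : ℝ) / n := by
  have hi := i.isLt
  have hj := j.isLt
  have hn' : (0:ℝ) < n := by exact_mod_cast hn
  rcases le_or_gt j.val i.val with h | h
  · have hv : ((i - j : Fin n).val : ℝ) = i.val - j.val := by
      rw [finSubVal, if_pos h]
      push_cast [h]
      ring
    have e : (i.val : ℝ) / n - (j.val : ℝ) / n = ((i - j : Fin n).val : ℝ) / n := by
      rw [hv]; ring
    rw [e]
    apply Int.fract_eq_self.mpr
    constructor
    · positivity
    · rw [div_lt_one hn']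
      have : (i - j : Fin n).val < n := (i - j).isLt
      exact_mod_cast this
  · have hv : ((i - j : Fin n).val : ℝ) = i.val + n - j.val := by
      rw [finSubVal, if_neg (by omega)]
      push_cast [show j.val ≤ i.val + n by omega]
      ring
    have e : (i.val : ℝ) / n - (j.val : ℝ) / n = ((i - j : Fin n).val : ℝ) / n - 1 := by
      rw [hv]
      field_simp
      ring
    rw [e]
    have h1 : Int.fract (((i - j : Fin n).val : ℝ) / n - (1:ℤ)) =
        Int.fract (((i - j : Fin n).val : ℝ) / n) := Int.fract_sub_intCast _ 1
    push_cast at h1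
    rw [h1]
    apply Int.fract_eq_self.mpr
    constructor
    · positivity
    · rw [div_lt_one hn']
      have : (i - j : Fin n).val < n := (i - j).isLt
      exact_mod_cast this

/-- a simple digraph is a circular-arc catch digraph iff there is a
vertex ordering with respect to which the augmented adjacency matrix satisfies
the circular ones property along rows. -/
theorem stmt_0 {V : Type*} [Fintype V] (E : V → V → Prop) (hirr : ∀ v, ¬ E v v) :
    IsCACatchDigraph E ↔
      ∃ σ : Fin (Fintype.card V) ≃ V,
        ∀ u : V, CircBlock {j | E u (σ j) ∨ u = σ j} := by
  constructor
  · rintro ⟨a, ℓ, p, hp, hE⟩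
    set n := Fintype.card V with hn
    let e := Fintype.equivFin V
    let f : Fin n → ℝ := fun i => Int.fract (p (e.symm i))
    let σ : Fin n ≃ V := (Tuple.sort f).trans e.symm
    refine ⟨σ, fun u => ?_⟩
    have hq : Monotone (fun j => Int.fract (p (σ j))) := Tuple.monotone_sort f
    set c := Int.fract (a u) with hc
    have hc0 : 0 ≤ c := Int.fract_nonneg _
    have hc1 : c < 1 := Int.fract_lt_one _
    have key : ∀ v : V, Int.fract (p v - a u) = Int.fract (Int.fract (p v) - c) := by
      intro v
      have e1 : Int.fract (p v) - c = p v - a u - ((⌊p v⌋ - ⌊a u⌋ : ℤ) : ℝ) := by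
        simp only [Int.fract, hc]
        push_cast
        ring
      rw [e1, Int.fract_sub_intCast]
    have key1 : ∀ j, (E u (σ j) ∨ u = σ j) ↔
        Int.fract (Int.fract (p (σ j)) - c) ≤ ℓ u := by
      intro j
      rw [← key (σ j)]
      constructor
      · rintro (h | h)
        · exact ((hE u (σ j)).mp h).2
        · rw [← h]
          exact hp u
      · intro h
        by_cases huv : u = σ j
        · exact Or.inr huv
        · exact Or.inl ((hE u (σ j)).mpr ⟨huv, h⟩)
    have key2 : ∀ j, Int.fract (Int.fract (p (σ j)) - c) ≤ ℓ u ↔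
        ((c ≤ Int.fract (p (σ j)) ∧ Int.fract (p (σ j)) ≤ c + ℓ u) ∨
          Int.fract (p (σ j)) ≤ c + ℓ u - 1) := by
      intro j
      set x := Int.fract (p (σ j)) with hx
      have hx0 : 0 ≤ x := Int.fract_nonneg _
      have hx1 : x < 1 := Int.fract_lt_one _
      rcases le_or_gt c x with h | h
      · rw [Int.fract_eq_self.mpr ⟨by linarith, by linarith⟩]
        constructor
        · intro h'
          exact Or.inl ⟨h, by linarith⟩
        · rintro (⟨-, h'⟩ | h') <;> linarith
      · have h1 : Int.fract (x - c + (1:ℤ)) = Int.fract (x - c) := Int.fract_add_intCast _ 1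
        push_cast at h1
        rw [← h1, Int.fract_eq_self.mpr ⟨by linarith, by linarith⟩]
        constructor
        · intro h'
          exact Or.inr (by linarith)
        · rintro (⟨h', -⟩ | h') <;> linarith
    have hset : {j | E u (σ j) ∨ u = σ j} =
        {j | (c ≤ Int.fract (p (σ j)) ∧ Int.fract (p (σ j)) ≤ c + ℓ u) ∨
          Int.fract (p (σ j)) ≤ c + ℓ u - 1} := by
      ext j
      simp only [Set.mem_setOf_eq]
      rw [key1 j, key2 j]
    rw [hset]
    by_cases hℓ : 1 ≤ c + ℓ u
    · have : {j | (c ≤ Int.fract (p (σ j)) ∧ Int.fract (p (σ j)) ≤ c + ℓ u) ∨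
          Int.fract (p (σ j)) ≤ c + ℓ u - 1} =
          {j | c ≤ Int.fract (p (σ j)) ∨ Int.fract (p (σ j)) ≤ c + ℓ u - 1} := by
        ext j
        have hx1 : Int.fract (p (σ j)) < 1 := Int.fract_lt_one _
        simp only [Set.mem_setOf_eq]
        constructor
        · rintro (⟨h1, -⟩ | h1)
          · exact Or.inl h1
          · exact Or.inr h1
        · rintro (h1 | h1)
          · exact Or.inl ⟨h1, by linarith⟩
          · exact Or.inr h1
      rw [this]
      exact circBlock_union_mono _ hq c (c + ℓ u - 1)
    · push_neg at hℓ
      have : {j | (c ≤ Int.fract (p (σ j)) ∧ Int.fract (p (σ j)) ≤ c + ℓ u) ∨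
          Int.fract (p (σ j)) ≤ c + ℓ u - 1} =
          {j | c ≤ Int.fract (p (σ j)) ∧ Int.fract (p (σ j)) ≤ c + ℓ u} := by
        ext j
        have hx0 : 0 ≤ Int.fract (p (σ j)) := Int.fract_nonneg _
        simp only [Set.mem_setOf_eq]
        constructor
        · rintro (h1 | h1)
          · exact h1
          · linarith
        · exact Or.inl
      rw [this]
      exact circBlock_inter_mono _ hq c (c + ℓ u)
  · rintro ⟨σ, hσ⟩
    have hrow : ∀ u : V, ∃ A B : Fin (Fintype.card V),
        {j | E u (σ j) ∨ u = σ j} = {i | i - A ≤ B - A} := by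
      intro u
      rcases hσ u with h | h
      · exfalso
        have : σ.symm u ∈ ({j | E u (σ j) ∨ u = σ j} : Set (Fin (Fintype.card V))) :=
          Or.inr (σ.apply_symm_apply u).symm
        rw [h] at this
        exact this
      · exact h
    choose A B hAB using hrow
    refine ⟨fun u => ((A u).val : ℝ) / (Fintype.card V),
      fun u => (((B u - A u : Fin (Fintype.card V))).val : ℝ) / (Fintype.card V),
      fun v => ((σ.symm v).val : ℝ) / (Fintype.card V), ?_, ?_⟩
    · intro v
      have hn0 : 0 < Fintype.card V := Fintype.card_pos_iff.mpr ⟨v⟩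
      have hmem : σ.symm v ∈ ({j | E v (σ j) ∨ v = σ j} : Set (Fin (Fintype.card V))) :=
        Or.inr (σ.apply_symm_apply v).symm
      rw [hAB v] at hmem
      show Int.fract _ ≤ _
      rw [fract_val_div hn0]
      have hval : ((σ.symm v - A v : Fin (Fintype.card V)).val : ℝ) ≤
          ((B v - A v : Fin (Fintype.card V)).val : ℝ) := by
        exact_mod_cast Fin.le_def.mp hmem
      have hn' : (0:ℝ) < (Fintype.card V : ℝ) := by exact_mod_cast hn0
      exact (div_le_div_iff_of_pos_right hn').mpr hval
    · intro u v
      have hn0 : 0 < Fintype.card V := Fintype.card_pos_iff.mpr ⟨v⟩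
      have hn' : (0:ℝ) < (Fintype.card V : ℝ) := by exact_mod_cast hn0
      have harc : arcMem (((A u).val : ℝ) / (Fintype.card V))
          (((B u - A u : Fin (Fintype.card V)).val : ℝ) / (Fintype.card V))
          (((σ.symm v).val : ℝ) / (Fintype.card V)) ↔
          σ.symm v ∈ ({j | E u (σ j) ∨ u = σ j} : Set (Fin (Fintype.card V))) := by
        rw [hAB u]
        show Int.fract _ ≤ _ ↔ _
        rw [fract_val_div hn0]
        constructor
        · intro h
          have : ((σ.symm v - A u : Fin (Fintype.card V)).val : ℝ) ≤
              ((B u - A u : Fin (Fintype.card V)).val : ℝ) := (div_le_div_iff_of_pos_right hn').mp h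
          exact Fin.le_def.mpr (by exact_mod_cast this)
        · intro h
          have hval : ((σ.symm v - A u : Fin (Fintype.card V)).val : ℝ) ≤
              ((B u - A u : Fin (Fintype.card V)).val : ℝ) := by
            exact_mod_cast Fin.le_def.mp h
          exact (div_le_div_iff_of_pos_right hn').mpr hval
      constructor
      · intro hEuv
        have hne : u ≠ v := by
          intro h
          exact hirr v (h ▸ hEuv)
        refine ⟨hne, harc.mpr ?_⟩
        exact Or.inl (by rw [σ.apply_symm_apply]; exact hEuv)
      · rintro ⟨hne, hm⟩
        have := harc.mp hm
        rw [Set.mem_setOf_eq, σ.apply_symm_apply] at this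
        rcases this with h | h
        · exact h
        · exact absurd h hne
end

section
/- Let G be an oriented circular-arc catch digraph on n vertices that contains no directed cycle of length n. Then G contains a vertex of outdegree zero. -/
open Function
open Int (fract)

section FractArith

variable {R : Type*} [CommRing R] [LinearOrder R] [IsStrictOrderedRing R] [FloorRing R] {u v : R}

lemma fract_sub_eq_of_fract_le (h : fract v ≤ fract u) : fract (u - v) = fract u - fract v := by
  refine Int.fract_eq_iff.2
    ⟨by linarith, by linarith [Int.fract_lt_one u, Int.fract_nonneg v], ⌊u⌋ - ⌊v⌋, ?_⟩
  unfold Int.fract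
  push_cast
  ring

lemma fract_sub_eq_of_fract_lt (h : fract u < fract v) :
    fract (u - v) = fract u - fract v + 1 := by
  refine Int.fract_eq_iff.2
    ⟨by linarith [Int.fract_lt_one v, Int.fract_nonneg u], by linarith, ⌊u⌋ - ⌊v⌋ - 1, ?_⟩
  unfold Int.fract
  push_cast
  ring

lemma fract_add_eq_of_one_le (h : 1 ≤ fract u + fract v) :
    fract (u + v) = fract u + fract v - 1 := by
  refine Int.fract_eq_iff.2
    ⟨by linarith, by linarith [Int.fract_lt_one u, Int.fract_lt_one v], ⌊u⌋ + ⌊v⌋ + 1, ?_⟩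
  unfold Int.fract
  push_cast
  ring

end FractArith

/-! `fract (y - x)` is the clockwise distance from `x` to `y` on the circle `ℝ / ℤ`. -/

section Arcs

variable {a ℓ x y z : ℝ}

lemma arcMem_congr (h : fract x = fract y) (hx : arcMem a ℓ x) : arcMem a ℓ y := by
  obtain ⟨k, hk⟩ := Int.fract_eq_fract.1 h
  have : fract (y - a) = fract (x - a) := Int.fract_eq_fract.2 ⟨-k, by push_cast; linarith⟩
  rwa [arcMem, this]

lemma arcMem_of_fract_sub_le (hy : arcMem a ℓ y) (hxy : fract (x - a) ≤ fract (y - a))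
    (hz : fract (z - x) ≤ fract (y - x)) : arcMem a ℓ z := by
  have hyx : fract (y - x) = fract (y - a) - fract (x - a) := by
    rw [← fract_sub_eq_of_fract_le hxy, sub_sub_sub_cancel_right]
  show fract (z - a) ≤ ℓ
  calc fract (z - a) = fract ((z - x) + (x - a)) := by rw [sub_add_sub_cancel]
    _ ≤ fract (z - x) + fract (x - a) := Int.fract_add_le _ _
    _ ≤ fract (y - a) := by linarith
    _ ≤ ℓ := hy

lemma arcMem_of_le_fract_sub (hx : arcMem a ℓ x) (hyx : fract (y - a) < fract (x - a))
    (hz : fract (y - x) ≤ fract (z - x)) : arcMem a ℓ z := by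
  have hyx' : fract (y - x) = fract (y - a) - fract (x - a) + 1 := by
    rw [← fract_sub_eq_of_fract_lt hyx, sub_sub_sub_cancel_right]
  have hwrap : 1 ≤ fract (z - x) + fract (x - a) := by linarith [Int.fract_nonneg (y - a)]
  show fract (z - a) ≤ ℓ
  calc fract (z - a) = fract ((z - x) + (x - a)) := by rw [sub_add_sub_cancel]
    _ = fract (z - x) + fract (x - a) - 1 := fract_add_eq_of_one_le hwrap
    _ ≤ fract (x - a) := by linarith [Int.fract_lt_one (z - x)]
    _ ≤ ℓ := hx

end Arcs

section CircularOrder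

variable {n : ℕ} {t : Fin (n + 1) → ℝ}

lemma fract_sub_of_le (ht : StrictMono (fun i => fract (t i))) {i j : Fin (n + 1)} (h : i ≤ j) :
    fract (t j - t i) = fract (t j) - fract (t i) :=
  fract_sub_eq_of_fract_le (ht.monotone h)

lemma fract_sub_of_lt (ht : StrictMono (fun i => fract (t i))) {i j : Fin (n + 1)} (h : j < i) :
    fract (t j - t i) = fract (t j) - fract (t i) + 1 :=
  fract_sub_eq_of_fract_lt (ht h)

/-- Points listed in increasing order of `fract` are in clockwise order when read cyclically from
any starting index `i`. -/
lemma fract_sub_add_mono (ht : StrictMono (fun i => fract (t i))) (i : Fin (n + 1))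
    {k l : Fin (n + 1)} (hkl : k ≤ l) : fract (t (i + k) - t i) ≤ fract (t (i + l) - t i) := by
  rcases (show (i ≤ i + k ∧ i + k ≤ i + l) ∨ (i ≤ i + k ∧ i + l < i) ∨
      (i + k ≤ i + l ∧ i + l < i) by fin_omega) with ⟨h₁, h₂⟩ | ⟨h₁, h₂⟩ | ⟨h₁, h₂⟩
  · rw [fract_sub_of_le ht h₁, fract_sub_of_le ht (h₁.trans h₂)]
    linarith [ht.monotone h₂]
  · rw [fract_sub_of_le ht h₁, fract_sub_of_lt ht h₂]
    linarith [Int.fract_lt_one (t (i + k)), Int.fract_nonneg (t (i + l))]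
  · rw [fract_sub_of_lt ht (h₁.trans_lt h₂), fract_sub_of_lt ht h₂]
    linarith [ht.monotone h₁]

lemma fract_sub_succ_le (ht : StrictMono (fun i => fract (t i))) {i j : Fin (n + 1)}
    (hji : j ≠ i) : fract (t (i + 1) - t i) ≤ fract (t j - t i) := by
  simpa using fract_sub_add_mono ht i (Fin.one_le_of_ne_zero (sub_ne_zero.2 hji))

lemma fract_sub_le_pred (ht : StrictMono (fun i => fract (t i))) (i j : Fin (n + 1)) :
    fract (t j - t i) ≤ fract (t (i - 1) - t i) := by
  have hlast : Fin.last n = -1 := Fin.ext Fin.coe_neg_one.symm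
  simpa [hlast, ← sub_eq_add_neg] using fract_sub_add_mono ht i (Fin.le_last (j - i))

lemma arcMem_succ_or_pred (ht : StrictMono (fun i => fract (t i))) {a ℓ : ℝ} {i j : Fin (n + 1)}
    (hi : arcMem a ℓ (t i)) (hj : arcMem a ℓ (t j)) (hji : j ≠ i) :
    arcMem a ℓ (t (i + 1)) ∨ arcMem a ℓ (t (i - 1)) := by
  rcases le_or_gt (fract (t i - a)) (fract (t j - a)) with h | h
  · exact .inl (arcMem_of_fract_sub_le hj h (fract_sub_succ_le ht hji))
  · exact .inr (arcMem_of_le_fract_sub hi h (fract_sub_le_pred ht i j))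

end CircularOrder

lemma exists_equiv_fin_strictMono {V α : Type*} [Fintype V] [LinearOrder α] {f : V → α}
    (hf : Injective f) {N : ℕ} (hN : Fintype.card V = N) :
    ∃ c : Fin N ≃ V, StrictMono (f ∘ c) := by
  let e : Fin N ≃ V := (Fintype.equivFinOfCardEq hN).symm
  let c : Fin N ≃ V := (Tuple.sort (f ∘ e)).trans e
  exact ⟨c, (Tuple.monotone_sort (f ∘ e)).strictMono_of_injective (hf.comp c.injective)⟩

open Fin.NatCast in
lemma forall_add_one_or_forall_sub_one {n : ℕ} {R : Fin (n + 1) → Fin (n + 1) → Prop}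
    (hR : ∀ i j, R i j → ¬ R j i) (h : ∀ i, R i (i + 1) ∨ R i (i - 1)) :
    (∀ i, R i (i + 1)) ∨ ∀ i, R i (i - 1) := by
  refine or_iff_not_imp_left.2 fun hsucc => ?_
  obtain ⟨k, hk⟩ := not_forall.1 hsucc
  have hback : ∀ s : ℕ, ¬ R (k - s) (k - s + 1) := by
    intro s
    induction s with
    | zero => simpa using hk
    | succ s ih =>
      rw [Nat.cast_succ, ← sub_sub, sub_add_cancel]
      exact hR _ _ ((h (k - s)).resolve_left ih)
  intro j
  refine (h j).resolve_left ?_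
  simpa using hback (k - j).val

section CatchDigraph

variable {V : Type*} {E : V → V → Prop} {a ℓ p : V → ℝ}

lemma injective_fract_of_oriented (hp : ∀ v, arcMem (a v) (ℓ v) (p v))
    (hE : ∀ u v, E u v ↔ u ≠ v ∧ arcMem (a u) (ℓ u) (p v)) (horient : Oriented E) :
    Injective (fun v => fract (p v)) := by
  intro u v huv
  by_contra hne
  exact horient u v ((hE u v).2 ⟨hne, arcMem_congr huv (hp u)⟩)
    ((hE v u).2 ⟨Ne.symm hne, arcMem_congr huv.symm (hp v)⟩)

lemma catches_succ_or_pred (hp : ∀ v, arcMem (a v) (ℓ v) (p v))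
    (hE : ∀ u v, E u v ↔ u ≠ v ∧ arcMem (a u) (ℓ u) (p v)) {n : ℕ} {c : Fin (n + 1) ≃ V}
    (hc : StrictMono (fun i => fract (p (c i)))) {i : Fin (n + 1)} {w : V} (hw : E (c i) w) :
    E (c i) (c (i + 1)) ∨ E (c i) (c (i - 1)) := by
  obtain ⟨hne, hmem⟩ := (hE _ _).1 hw
  obtain ⟨j, rfl⟩ := c.surjective w
  have hji : j ≠ i := fun h => hne (congrArg c h.symm)
  have hone : (1 : Fin (n + 1)) ≠ 0 := by
    rw [Ne, Fin.one_eq_zero_iff, add_eq_right]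
    rintro rfl
    exact hji (Subsingleton.elim (α := Fin 1) _ _)
  rcases arcMem_succ_or_pred hc (hp (c i)) hmem hji with h | h
  · exact .inl ((hE _ _).2 ⟨c.injective.ne (add_ne_left.2 hone).symm, h⟩)
  · exact .inr ((hE _ _).2 ⟨c.injective.ne (Ne.symm (mt sub_eq_self.1 hone)), h⟩)

end CatchDigraph

theorem stmt_1_general {V : Type*} [Fintype V] (E : V → V → Prop)
    (horient : Oriented E)
    (hcatch : IsCACatchDigraph E)
    (hnocyc : ¬ ∃ c : Fin (Fintype.card V) ≃ V,
        ∀ i, E (c i) (c (finRotate (Fintype.card V) i))) :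
    ∃ v : V, ∀ w : V, ¬ E v w := by
  obtain ⟨a, ℓ, p, hp, hE⟩ := hcatch
  by_contra! hsink
  apply hnocyc
  cases hN : Fintype.card V with
  | zero => exact ⟨(Fintype.equivFinOfCardEq hN).symm, finZeroElim⟩
  | succ n =>
    obtain ⟨c, hc⟩ :=
      exists_equiv_fin_strictMono (injective_fract_of_oriented hp hE horient) hN
    have hstep : ∀ i, E (c i) (c (i + 1)) ∨ E (c i) (c (i - 1)) := fun i =>
      catches_succ_or_pred hp hE hc (hsink (c i)).choose_spec
    rcases forall_add_one_or_forall_sub_one (fun i j => horient (c i) (c j)) hstep with h | h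
    · exact ⟨c, fun i => by simpa [finRotate_apply] using h i⟩
    · refine ⟨(Equiv.neg _).trans c, fun i => ?_⟩
      show E (c (-i)) (c (-finRotate _ i))
      rw [finRotate_apply, neg_add']
      exact h (-i)

/-- an oriented circular-arc catch digraph on n vertices containing
no directed cycle of length n has a vertex of outdegree zero. -/
theorem stmt_1 {V : Type*} [Fintype V] (E : V → V → Prop)
    (hirr : ∀ v, ¬ E v v) (horient : Oriented E)
    (hcatch : IsCACatchDigraph E)
    (hnocyc : ¬ ∃ c : Fin (Fintype.card V) ≃ V,
        ∀ i, E (c i) (c (finRotate (Fintype.card V) i))) :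
    ∃ v : V, ∀ w : V, ¬ E v w :=
  stmt_1_general E horient hcatch hnocyc
end

section
/- If G is an oriented proper circular-arc catch digraph, then the underlying undirected graph of G is a proper circular-arc graph. -/
namespace Stmt4Aux

noncomputable def dd (x y : ℝ) : ℝ := Int.fract (x - y)

lemma dd_nonneg (x y : ℝ) : 0 ≤ dd x y := Int.fract_nonneg _
lemma dd_lt_one (x y : ℝ) : dd x y < 1 := Int.fract_lt_one _
lemma dd_self (x : ℝ) : dd x x = 0 := by simp [dd]

lemma fract_eval_lo {t : ℝ} (h0 : 0 ≤ t) (h1 : t < 1) : Int.fract t = t :=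
  Int.fract_eq_self.2 ⟨h0, h1⟩

lemma fract_eval_hi {t : ℝ} (h0 : 1 ≤ t) (h1 : t < 2) : Int.fract t = t - 1 := by
  have h : Int.fract (t - (1:ℤ)) = Int.fract t := Int.fract_sub_intCast t 1
  rw [← h]; push_cast
  exact fract_eval_lo (by linarith) (by linarith)

lemma dd_comp (x y z : ℝ) : dd x z = Int.fract (dd x y + dd y z) := by
  have h : dd x y + dd y z = (x - z) - ((⌊x - y⌋ + ⌊y - z⌋ : ℤ) : ℝ) := by
    simp only [dd, Int.fract]; push_cast; ring
  rw [h, Int.fract_sub_intCast]; rfl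

lemma dd_sub (x y z : ℝ) : dd x z = Int.fract (dd x y - dd z y) := by
  have h : dd x y - dd z y = (x - z) - ((⌊x - y⌋ - ⌊z - y⌋ : ℤ) : ℝ) := by
    simp only [dd, Int.fract]; push_cast; ring
  rw [h, Int.fract_sub_intCast]; rfl

lemma dd_sub' (x y z : ℝ) : dd y z = Int.fract (dd x z - dd x y) := by
  have h : dd x z - dd x y = (y - z) - ((⌊x - z⌋ - ⌊x - y⌋ : ℤ) : ℝ) := by
    simp only [dd, Int.fract]; push_cast; ring
  rw [h, Int.fract_sub_intCast]; rfl

lemma dd_rev {x y : ℝ} (h : dd x y ≠ 0) : dd y x = 1 - dd x y := by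
  have hxy : (y - x) = -(x - y) := by ring
  rw [dd, hxy, Int.fract_neg h]; rfl

lemma dd_eq_zero_symm {x y : ℝ} (h : dd x y = 0) : dd y x = 0 := by
  have hx : x - y = ((⌊x - y⌋ : ℤ) : ℝ) := by
    have h2 : Int.fract (x - y) = 0 := h
    unfold Int.fract at h2
    linarith
  have hy : y - x = ((-⌊x - y⌋ : ℤ) : ℝ) := by push_cast; linarith
  rw [dd, hy, Int.fract_intCast]

lemma dd_congr_left {x y : ℝ} (h : dd x y = 0) (z : ℝ) : dd x z = dd y z := by
  rw [dd_comp x y z, h, zero_add]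
  exact fract_eval_lo (dd_nonneg _ _) (dd_lt_one _ _)

lemma dd_congr_right {x y : ℝ} (h : dd x y = 0) (z : ℝ) : dd z x = dd z y := by
  rw [dd_sub z y x, h, sub_zero]
  exact fract_eval_lo (dd_nonneg _ _) (dd_lt_one _ _)

/-- evaluate a composed distance in the no-wrap case -/
lemma dd_comp_lo {x y z : ℝ} (h : dd x y + dd y z < 1) : dd x z = dd x y + dd y z := by
  rw [dd_comp x y z]
  exact fract_eval_lo (add_nonneg (dd_nonneg _ _) (dd_nonneg _ _)) h

/-- evaluate a composed distance in the wrap case -/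
lemma dd_comp_hi {x y z : ℝ} (h : 1 ≤ dd x y + dd y z) : dd x z = dd x y + dd y z - 1 := by
  rw [dd_comp x y z]
  exact fract_eval_hi h (by linarith [dd_lt_one x y, dd_lt_one y z])

/-- distance between two points from their coordinates rel. a common anchor, no-wrap case -/
lemma dd_sub_lo {x y z : ℝ} (h : dd z y ≤ dd x y) : dd x z = dd x y - dd z y := by
  rw [dd_sub x y z]
  exact fract_eval_lo (by linarith) (by linarith [dd_lt_one x y, dd_nonneg z y])

/-- distance between two points from the distances of a common point to them, no-wrap case -/
lemma dd_sub'_lo {x y z : ℝ} (h : dd x y ≤ dd x z) : dd y z = dd x z - dd x y := by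
  rw [dd_sub' x y z]
  exact fract_eval_lo (by linarith) (by linarith [dd_lt_one x z, dd_nonneg x y])

lemma mem_arcSet_iff {a ℓ x : ℝ} : x ∈ arcSet a ℓ ↔ dd x a ≤ ℓ := Iff.rfl

/-- G1: sufficient condition for containment of arcs. -/
lemma arc_subset {a₁ ℓ₁ a₂ ℓ₂ : ℝ} (h₁ : 0 ≤ ℓ₁)
    (h : dd a₁ a₂ + ℓ₁ ≤ ℓ₂) : arcSet a₁ ℓ₁ ⊆ arcSet a₂ ℓ₂ := by
  intro x hx
  rw [mem_arcSet_iff] at hx ⊢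
  have hg0 := dd_nonneg a₁ a₂
  have hr0 := dd_nonneg x a₁
  have hr1 := dd_lt_one x a₁
  rcases lt_or_ge (dd x a₁ + dd a₁ a₂) 1 with hc | hc
  · rw [dd_comp x a₁ a₂, fract_eval_lo (by linarith) hc]
    linarith
  · rw [dd_comp x a₁ a₂, fract_eval_hi hc (by linarith [dd_lt_one a₁ a₂])]
    linarith

/-- G2: necessary condition for containment of arcs (given lengths in `[0,1)`). -/
lemma arc_subset_le {a₁ ℓ₁ a₂ ℓ₂ : ℝ} (h₁ : 0 ≤ ℓ₁) (h₁' : ℓ₁ < 1) (h₂' : ℓ₂ < 1)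
    (h : arcSet a₁ ℓ₁ ⊆ arcSet a₂ ℓ₂) : dd a₁ a₂ + ℓ₁ ≤ ℓ₂ := by
  have hg : dd a₁ a₂ ≤ ℓ₂ := by
    have hmem : a₁ ∈ arcSet a₁ ℓ₁ := by rw [mem_arcSet_iff, dd_self]; exact h₁
    exact h hmem
  have hg0 := dd_nonneg a₁ a₂
  have hend : dd (a₁ + ℓ₁) a₁ = ℓ₁ := by
    rw [dd]; simp only [add_sub_cancel_left]; exact fract_eval_lo h₁ h₁'
  have hmem : (a₁ + ℓ₁) ∈ arcSet a₁ ℓ₁ := by rw [mem_arcSet_iff, hend]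
  have hin : dd (a₁ + ℓ₁) a₂ ≤ ℓ₂ := h hmem
  rcases lt_or_ge (dd a₁ a₂ + ℓ₁) 1 with hc | hc
  · rw [dd_comp (a₁ + ℓ₁) a₁ a₂, hend,
      fract_eval_lo (by linarith) (by linarith)] at hin
    linarith
  · exfalso
    set x := a₂ + (ℓ₂ + 1)/2 with hxdef
    have hx2 : dd x a₂ = (ℓ₂ + 1)/2 := by
      rw [dd]; simp only [hxdef, add_sub_cancel_left]
      exact fract_eval_lo (by linarith) (by linarith)
    have hxout : x ∉ arcSet a₂ ℓ₂ := by
      rw [mem_arcSet_iff, hx2]; push_neg; linarith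
    have hxin : x ∈ arcSet a₁ ℓ₁ := by
      rw [mem_arcSet_iff]
      have hxa : dd x a₁ = (ℓ₂ + 1)/2 - dd a₁ a₂ := by
        rw [dd_sub x a₂ a₁, hx2]
        exact fract_eval_lo (by linarith) (by linarith)
      rw [hxa]; linarith
    exact hxout (h hxin)

/-- G3: intersection criterion. -/
lemma arc_inter_nonempty_iff {a₁ ℓ₁ a₂ ℓ₂ : ℝ} (h₁ : 0 ≤ ℓ₁) (h₂ : 0 ≤ ℓ₂) :
    (arcSet a₁ ℓ₁ ∩ arcSet a₂ ℓ₂).Nonempty ↔ dd a₂ a₁ ≤ ℓ₁ ∨ dd a₁ a₂ ≤ ℓ₂ := by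
  constructor
  · rintro ⟨x, hx1, hx2⟩
    rw [mem_arcSet_iff] at hx1 hx2
    rcases le_total (dd x a₂) (dd x a₁) with hc | hc
    · left
      rw [dd_sub' x a₂ a₁,
        fract_eval_lo (by linarith) (by linarith [dd_lt_one x a₁, dd_nonneg x a₂])]
      linarith [dd_nonneg x a₂]
    · right
      rw [dd_sub' x a₁ a₂,
        fract_eval_lo (by linarith) (by linarith [dd_lt_one x a₂, dd_nonneg x a₁])]
      linarith [dd_nonneg x a₁]
  · rintro (h | h)
    · exact ⟨a₂, by rw [mem_arcSet_iff]; exact h, by rw [mem_arcSet_iff, dd_self]; exact h₂⟩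
    · exact ⟨a₁, by rw [mem_arcSet_iff, dd_self]; exact h₁, by rw [mem_arcSet_iff]; exact h⟩

end Stmt4Aux
namespace Stmt4Aux

section Rep

variable {V : Type*}

/-- A proper oriented catch representation with all lengths `< 1`. -/
structure Rep (E : V → V → Prop) (a ℓ p : V → ℝ) : Prop where
  hp : ∀ v, dd (p v) (a v) ≤ ℓ v
  hlt : ∀ v, ℓ v < 1
  hprop : ∀ u v, ¬ arcSet (a u) (ℓ u) ⊂ arcSet (a v) (ℓ v)
  hE : ∀ u v, E u v ↔ u ≠ v ∧ dd (p v) (a u) ≤ ℓ u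
  hor : ∀ u v, E u v → ¬ E v u

variable {E : V → V → Prop} {a ℓ p : V → ℝ}

lemma Rep.l0 (h : Rep E a ℓ p) (v : V) : 0 ≤ ℓ v :=
  le_trans (dd_nonneg _ _) (h.hp v)

lemma Rep.ne_of_dd_pos {u v : V} (h : 0 < dd (p u) (p v)) : u ≠ v := by
  intro heq; subst heq; rw [dd_self] at h; exact lt_irrefl _ h

lemma Rep.dist_pos (h : Rep E a ℓ p) {u v : V} (hne : u ≠ v) : 0 < dd (p u) (p v) := by
  rcases lt_or_eq_of_le (dd_nonneg (p u) (p v)) with h' | h'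
  · exact h'
  · exfalso
    have hz : dd (p u) (p v) = 0 := h'.symm
    have h1 : E u v := (h.hE u v).2 ⟨hne, by
      rw [← dd_congr_left hz (a u)]; exact h.hp u⟩
    have h2 : E v u := (h.hE v u).2 ⟨hne.symm, by
      rw [← dd_congr_left (dd_eq_zero_symm hz) (a v)]; exact h.hp v⟩
    exact h.hor u v h1 h2

lemma Rep.eq_of_dd (h : Rep E a ℓ p) {u v : V} (hz : dd (p u) (p v) = 0) : u = v := by
  by_contra hne
  exact absurd hz (ne_of_gt (h.dist_pos hne))

lemma Rep.memE (h : Rep E a ℓ p) {u v : V} (hne : u ≠ v) (hm : dd (p v) (a u) ≤ ℓ u) :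
    E u v := (h.hE u v).2 ⟨hne, hm⟩

lemma Rep.E_mem (h : Rep E a ℓ p) {u v : V} (he : E u v) : dd (p v) (a u) ≤ ℓ u :=
  ((h.hE u v).1 he).2

lemma Rep.E_ne (h : Rep E a ℓ p) {u v : V} (he : E u v) : u ≠ v :=
  ((h.hE u v).1 he).1

lemma Rep.notMem (h : Rep E a ℓ p) {u v : V} (hne : u ≠ v) (hn : ¬ E u v) :
    ℓ u < dd (p v) (a u) := by
  by_contra hc
  push_neg at hc
  exact hn (h.memE hne hc)

/-- `u` catches `v` behind its own point. -/
def typeB (E : V → V → Prop) (a p : V → ℝ) (u v : V) : Prop :=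
  E u v ∧ dd (p v) (a u) < dd (p u) (a u)

/-- `u` catches `v` ahead of its own point. -/
def typeF (E : V → V → Prop) (a p : V → ℝ) (u v : V) : Prop :=
  E u v ∧ dd (p u) (a u) < dd (p v) (a u)

lemma Rep.typeB_dist (h : Rep E a ℓ p) {u v : V} (hB : typeB E a p u v) :
    dd (p u) (p v) = dd (p u) (a u) - dd (p v) (a u) :=
  dd_sub_lo (le_of_lt hB.2)

lemma Rep.typeF_dist (h : Rep E a ℓ p) {u v : V} (hF : typeF E a p u v) :
    dd (p v) (p u) = dd (p v) (a u) - dd (p u) (a u) :=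
  dd_sub_lo (le_of_lt hF.2)

lemma Rep.E_split (h : Rep E a ℓ p) {u v : V} (he : E u v) :
    typeB E a p u v ∨ typeF E a p u v := by
  rcases lt_trichotomy (dd (p v) (a u)) (dd (p u) (a u)) with hc | hc | hc
  · exact Or.inl ⟨he, hc⟩
  · exfalso
    have hz : dd (p v) (p u) = 0 := by
      rw [dd_sub_lo (le_of_eq hc.symm), hc, sub_self]
    exact (h.E_ne he) (h.eq_of_dd hz).symm
  · exact Or.inr ⟨he, hc⟩

end Rep
end Stmt4Aux
namespace Stmt4Aux
section Rep2
variable {V : Type*} {E : V → V → Prop} {a ℓ p : V → ℝ}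

/-- Strong claim, backward version: if `u` catches `v` behind its point, every vertex `w`
whose point lies strictly between `p v` and `p u` also catches `v`. -/
lemma Rep.strongB (h : Rep E a ℓ p) {u v w : V} (hB : typeB E a p u v)
    (h0 : 0 < dd (p w) (p v)) (hlt : dd (p w) (p v) < dd (p u) (p v)) : E w v := by
  obtain ⟨he, hBlt⟩ := hB
  have hαl : dd (p v) (a u) ≤ ℓ u := h.E_mem he
  have hπu : dd (p u) (a u) ≤ ℓ u := h.hp u
  have hδ : dd (p u) (p v) = dd (p u) (a u) - dd (p v) (a u) :=
    h.typeB_dist ⟨he, hBlt⟩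
  have hwv : w ≠ v := Rep.ne_of_dd_pos h0
  have hlu1 : ℓ u < 1 := h.hlt u
  have hα0 := dd_nonneg (p v) (a u)
  -- coordinate of `p w` relative to `a u`
  have hw_au : dd (p w) (a u) = dd (p w) (p v) + dd (p v) (a u) := by
    apply dd_comp_lo; linarith
  have huw : dd (p u) (p w) = dd (p u) (a u) - dd (p w) (a u) :=
    dd_sub_lo (by rw [hw_au]; linarith)
  have huw_pos : 0 < dd (p u) (p w) := by rw [huw, hw_au]; linarith
  have hEuw : E u w := h.memE (Rep.ne_of_dd_pos huw_pos) (by rw [hw_au]; linarith)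
  have hnwu : ¬ E w u := h.hor u w hEuw
  by_contra hnwv
  have hwv_mem : ℓ w < dd (p v) (a w) := h.notMem hwv hnwv
  have hwu_mem : ℓ w < dd (p u) (a w) := h.notMem (h.E_ne hEuw).symm hnwu
  have hβ : dd (p w) (a w) ≤ ℓ w := h.hp w
  have hβ0 := dd_nonneg (p w) (a w)
  have hvw : dd (p v) (p w) = 1 - dd (p w) (p v) := dd_rev (ne_of_gt h0)
  -- the start of the arc of `w` lies strictly behind `p v` (else `p v ∈ I_w`)
  have hβc : dd (p w) (a w) < dd (p w) (p v) := by
    by_contra hge; push_neg at hge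
    have hcmp : dd (p v) (a w) = dd (p v) (p w) + dd (p w) (a w) - 1 :=
      dd_comp_hi (by rw [hvw]; linarith)
    rw [hcmp, hvw] at hwv_mem
    linarith
  -- coordinate of `p u` relative to `a w` : it lies beyond the end of `I_w`
  have hu_aw : dd (p u) (a w) = dd (p u) (p w) + dd (p w) (a w) := by
    apply dd_comp_lo; rw [huw, hw_au]; linarith
  have hwu_mem' := hwu_mem
  rw [hu_aw] at hwu_mem'
  -- `I_w` is strictly contained in `I_u` : contradiction with properness
  have haw_au : dd (a w) (a u) = dd (p w) (a u) - dd (p w) (a w) :=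
    dd_sub'_lo (by rw [hw_au]; linarith)
  have hsub : arcSet (a w) (ℓ w) ⊆ arcSet (a u) (ℓ u) := by
    apply arc_subset (h.l0 w)
    rw [haw_au, hw_au]
    rw [huw, hw_au] at hwu_mem'
    linarith
  have hstrict : arcSet (a w) (ℓ w) ⊂ arcSet (a u) (ℓ u) := by
    rw [Set.ssubset_iff_of_subset hsub]
    exact ⟨p v, hαl, fun hmem => absurd (mem_arcSet_iff.1 hmem) (not_le.2 hwv_mem)⟩
  exact h.hprop w u hstrict

end Rep2
end Stmt4Aux
namespace Stmt4Aux
section Rep3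
variable {V : Type*} {E : V → V → Prop} {a ℓ p : V → ℝ}

/-- Strong claim, forward version: if `u` catches `v` ahead of its point, every vertex `w`
whose point lies strictly between `p u` and `p v` also catches `v`. -/
lemma Rep.strongF (h : Rep E a ℓ p) {u v w : V} (hF : typeF E a p u v)
    (h0 : 0 < dd (p v) (p w)) (hlt : dd (p v) (p w) < dd (p v) (p u)) : E w v := by
  obtain ⟨he, hFlt⟩ := hF
  have hρl : dd (p v) (a u) ≤ ℓ u := h.E_mem he
  have hπu0 := dd_nonneg (p u) (a u)
  have hδ : dd (p v) (p u) = dd (p v) (a u) - dd (p u) (a u) :=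
    h.typeF_dist ⟨he, hFlt⟩
  have hwv : w ≠ v := (Rep.ne_of_dd_pos h0).symm
  have hlu1 : ℓ u < 1 := h.hlt u
  -- coordinate of `p w` relative to `a u`
  have hw_au : dd (p w) (a u) = dd (p v) (a u) - dd (p v) (p w) :=
    dd_sub'_lo (by linarith)
  have hwu : dd (p w) (p u) = dd (p w) (a u) - dd (p u) (a u) :=
    dd_sub_lo (by rw [hw_au]; linarith)
  have hwu_pos : 0 < dd (p w) (p u) := by rw [hwu, hw_au]; linarith
  have hEuw : E u w := h.memE (Rep.ne_of_dd_pos hwu_pos).symm (by rw [hw_au]; linarith)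
  have hnwu : ¬ E w u := h.hor u w hEuw
  by_contra hnwv
  have hwv_mem : ℓ w < dd (p v) (a w) := h.notMem hwv hnwv
  have hwu_mem : ℓ w < dd (p u) (a w) := h.notMem (h.E_ne hEuw).symm hnwu
  have hβ : dd (p w) (a w) ≤ ℓ w := h.hp w
  have hβ0 := dd_nonneg (p w) (a w)
  have hc1 := dd_lt_one (p v) (p w)
  -- the end of `I_w` lies strictly before `p v`
  have hc'β : ℓ w < dd (p v) (p w) + dd (p w) (a w) := by
    rcases lt_or_ge (dd (p v) (p w) + dd (p w) (a w)) 1 with hc | hc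
    · rw [dd_comp_lo hc] at hwv_mem; exact hwv_mem
    · exfalso
      rw [dd_comp_hi hc] at hwv_mem
      linarith
  rcases le_or_gt (dd (p w) (a w)) (dd (p w) (a u)) with hcase | hcase
  · -- `I_w ⊂ I_u`, contradiction with properness
    have haw_au : dd (a w) (a u) = dd (p w) (a u) - dd (p w) (a w) :=
      dd_sub'_lo hcase
    have hsub : arcSet (a w) (ℓ w) ⊆ arcSet (a u) (ℓ u) := by
      apply arc_subset (h.l0 w)
      rw [haw_au, hw_au]
      linarith
    have hstrict : arcSet (a w) (ℓ w) ⊂ arcSet (a u) (ℓ u) := by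
      rw [Set.ssubset_iff_of_subset hsub]
      exact ⟨p u, h.hp u, fun hmem => absurd (mem_arcSet_iff.1 hmem) (not_le.2 hwu_mem)⟩
    exact h.hprop w u hstrict
  · -- then `p u ∈ I_w`, giving `E w u`, contradiction
    have huw_rev : dd (p u) (p w) = 1 - dd (p w) (p u) := dd_rev (ne_of_gt hwu_pos)
    have hu_aw : dd (p u) (a w) = dd (p u) (p w) + dd (p w) (a w) - 1 := by
      apply dd_comp_hi
      rw [huw_rev, hwu, hw_au]
      linarith
    have hmem : dd (p u) (a w) ≤ ℓ w := by
      rw [hu_aw, huw_rev, hwu, hw_au]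
      linarith
    exact hnwu (h.memE (h.E_ne hEuw).symm hmem)

end Rep3
end Stmt4Aux
namespace Stmt4Aux
section Rep4
variable {V : Type*}

variable (E : V → V → Prop) (a ℓ p : V → ℝ)

/-- candidate forward-reach distances of `v`. -/
def fSet (v : V) : Set ℝ :=
  insert (ℓ v - dd (p v) (a v)) {e | ∃ u, typeB E a p u v ∧ e = dd (p u) (p v)}

/-- candidate backward-reach distances of `v`. -/
def bSet (v : V) : Set ℝ :=
  insert (dd (p v) (a v)) {e | ∃ u, typeF E a p u v ∧ e = dd (p v) (p u)}

noncomputable def ff (v : V) : ℝ := sSup (fSet E a ℓ p v)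
noncomputable def bb (v : V) : ℝ := sSup (bSet E a p v)

variable {E a ℓ p}

lemma fSet_nonempty (v : V) : (fSet E a ℓ p v).Nonempty :=
  ⟨_, Set.mem_insert _ _⟩

lemma bSet_nonempty (v : V) : (bSet E a p v).Nonempty :=
  ⟨_, Set.mem_insert _ _⟩

lemma Rep.fSet_le_one (h : Rep E a ℓ p) {v : V} {e : ℝ} (he : e ∈ fSet E a ℓ p v) : e ≤ 1 := by
  rcases he with he | ⟨u, _, rfl⟩
  · have := h.hlt v; have := dd_nonneg (p v) (a v); simp only [he]; linarith
  · exact le_of_lt (dd_lt_one _ _)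

lemma Rep.bSet_le_one (h : Rep E a ℓ p) {v : V} {e : ℝ} (he : e ∈ bSet E a p v) : e ≤ 1 := by
  rcases he with he | ⟨u, _, rfl⟩
  · simp only [he]; exact le_of_lt (dd_lt_one _ _)
  · exact le_of_lt (dd_lt_one _ _)

lemma Rep.fSet_bdd (h : Rep E a ℓ p) (v : V) : BddAbove (fSet E a ℓ p v) :=
  ⟨1, fun _ he => h.fSet_le_one he⟩

lemma Rep.bSet_bdd (h : Rep E a ℓ p) (v : V) : BddAbove (bSet E a p v) :=
  ⟨1, fun _ he => h.bSet_le_one he⟩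

lemma Rep.ff_ge (h : Rep E a ℓ p) {v : V} {e : ℝ} (he : e ∈ fSet E a ℓ p v) :
    e ≤ ff E a ℓ p v := le_csSup (h.fSet_bdd v) he

lemma Rep.bb_ge (h : Rep E a ℓ p) {v : V} {e : ℝ} (he : e ∈ bSet E a p v) :
    e ≤ bb E a p v := le_csSup (h.bSet_bdd v) he

lemma Rep.ff_le_one (h : Rep E a ℓ p) (v : V) : ff E a ℓ p v ≤ 1 :=
  csSup_le (fSet_nonempty v) (fun _ he => h.fSet_le_one he)

lemma Rep.bb_le_one (h : Rep E a ℓ p) (v : V) : bb E a p v ≤ 1 :=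
  csSup_le (bSet_nonempty v) (fun _ he => h.bSet_le_one he)

lemma Rep.ff_nonneg (h : Rep E a ℓ p) (v : V) : 0 ≤ ff E a ℓ p v := by
  have h1 : ℓ v - dd (p v) (a v) ≤ ff E a ℓ p v := h.ff_ge (Set.mem_insert _ _)
  have h2 := h.hp v
  linarith

lemma Rep.bb_nonneg (h : Rep E a ℓ p) (v : V) : 0 ≤ bb E a p v := by
  have h1 : dd (p v) (a v) ≤ bb E a p v := h.bb_ge (Set.mem_insert _ _)
  have h2 := dd_nonneg (p v) (a v)
  linarith

lemma Rep.exists_fSet_gt (h : Rep E a ℓ p) {v : V} {θ : ℝ} (hθ : θ < ff E a ℓ p v) :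
    ∃ e ∈ fSet E a ℓ p v, θ < e :=
  exists_lt_of_lt_csSup (fSet_nonempty v) hθ

lemma Rep.exists_bSet_gt (h : Rep E a ℓ p) {v : V} {θ : ℝ} (hθ : θ < bb E a p v) :
    ∃ e ∈ bSet E a p v, θ < e :=
  exists_lt_of_lt_csSup (bSet_nonempty v) hθ

/-- a strict forward-reach excess implies an edge. -/
lemma Rep.edge_of_lt_ff (h : Rep E a ℓ p) {u v : V} (hne : u ≠ v)
    (hlt : dd (p u) (p v) < ff E a ℓ p v) : E u v ∨ E v u := by
  obtain ⟨e, he, hgt⟩ := h.exists_fSet_gt hlt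
  rcases he with he | ⟨x, hx, rfl⟩
  · right
    subst he
    have hπ0 := dd_nonneg (p v) (a v)
    have hlv1 := h.hlt v
    have hmem : dd (p u) (a v) = dd (p u) (p v) + dd (p v) (a v) :=
      dd_comp_lo (by linarith)
    exact h.memE hne.symm (by rw [hmem]; linarith)
  · left
    exact h.strongB hx (h.dist_pos hne) hgt

/-- a strict backward-reach excess implies an edge. -/
lemma Rep.edge_of_lt_bb (h : Rep E a ℓ p) {u v : V} (hne : u ≠ v)
    (hlt : dd (p u) (p v) < bb E a p u) : E u v ∨ E v u := by
  obtain ⟨e, he, hgt⟩ := h.exists_bSet_gt hlt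
  rcases he with he | ⟨y, hy, rfl⟩
  · left
    subst he
    have hmem : dd (p v) (a u) = dd (p u) (a u) - dd (p u) (p v) :=
      dd_sub'_lo (le_of_lt hgt)
    exact h.memE hne (by rw [hmem]; linarith [h.hp u, dd_nonneg (p u) (p v)])
  · right
    exact h.strongF hy (h.dist_pos hne) hgt

/-- every edge provides reaches covering half the gap on one side. -/
lemma Rep.bucket (h : Rep E a ℓ p) {u v : V} (he : E u v) :
    (dd (p u) (p v) ≤ ff E a ℓ p v ∧ dd (p u) (p v) ≤ bb E a p u) ∨
    (dd (p v) (p u) ≤ bb E a p v ∧ dd (p v) (p u) ≤ ff E a ℓ p u) := by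
  rcases h.E_split he with hB | hF
  · left
    have hd := h.typeB_dist hB
    constructor
    · exact h.ff_ge (Set.mem_insert_iff.2 (Or.inr ⟨u, hB, rfl⟩))
    · have h1 : dd (p u) (a u) ≤ bb E a p u := h.bb_ge (Set.mem_insert _ _)
      have h2 := dd_nonneg (p v) (a u)
      linarith
  · right
    have hd := h.typeF_dist hF
    constructor
    · exact h.bb_ge (Set.mem_insert_iff.2 (Or.inr ⟨u, hF, rfl⟩))
    · have h1 : ℓ u - dd (p u) (a u) ≤ ff E a ℓ p u := h.ff_ge (Set.mem_insert _ _)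
      have h2 := h.E_mem he
      linarith

end Rep4
end Stmt4Aux
namespace Stmt4Aux
section Rep5
variable {V : Type*} {E : V → V → Prop} {a ℓ p : V → ℝ}

/-- if `u, v` are non-adjacent, the forward reach of `v` plus the backward reach of `u`
is strictly less than twice the gap from `p v` to `p u`. -/
lemma Rep.nonedge_reach (h : Rep E a ℓ p) {u v : V} (hne : u ≠ v)
    (hnuv : ¬ E u v) (hnvu : ¬ E v u) :
    ff E a ℓ p v + bb E a p u < 2 * dd (p u) (p v) := by
  have hδ0 : 0 < dd (p u) (p v) := h.dist_pos hne
  have hδ1 : dd (p u) (p v) < 1 := dd_lt_one _ _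
  have hnoedge : ¬ (E u v ∨ E v u) := by tauto
  have hf : ff E a ℓ p v ≤ dd (p u) (p v) := by
    by_contra hc; push_neg at hc
    exact hnoedge (h.edge_of_lt_ff hne hc)
  have hb : bb E a p u ≤ dd (p u) (p v) := by
    by_contra hc; push_neg at hc
    exact hnoedge (h.edge_of_lt_bb hne hc)
  rcases lt_or_eq_of_le hf with hf' | hf'
  · linarith
  rcases lt_or_eq_of_le hb with hb' | hb'
  · linarith
  exfalso
  -- both suprema equal the gap exactly; first, no candidate attains it
  have hfne : ∀ e ∈ fSet E a ℓ p v, e ≠ dd (p u) (p v) := by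
    rintro e he rfl
    rcases he with he | ⟨x, hx, hxe⟩
    · -- the end of I_v would be exactly p u
      have hπ0 := dd_nonneg (p v) (a v)
      have hlv1 := h.hlt v
      have he2 : dd (p u) (p v) = ℓ v - dd (p v) (a v) := he
      have hmem : dd (p u) (a v) = dd (p u) (p v) + dd (p v) (a v) :=
        dd_comp_lo (by linarith)
      exact hnoedge (Or.inr (h.memE hne.symm (by rw [hmem]; linarith)))
    · -- the catcher x would be exactly at p u
      have hz : dd (p x) (p u) = 0 := by
        rw [dd_sub (p x) (p v) (p u), ← hxe, sub_self, Int.fract_zero]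
      have hxu : x = u := h.eq_of_dd hz
      exact hnoedge (Or.inl (hxu ▸ hx.1))
  have hbne : ∀ e ∈ bSet E a p u, e ≠ dd (p u) (p v) := by
    rintro e he rfl
    rcases he with he | ⟨y, hy, hye⟩
    · -- the start of I_u would be exactly p v
      have he2 : dd (p u) (p v) = dd (p u) (a u) := he
      have hmem : dd (p v) (a u) = dd (p u) (a u) - dd (p u) (p v) :=
        dd_sub'_lo (le_of_eq he2)
      exact hnoedge (Or.inl (h.memE hne (by rw [hmem]; linarith [h.l0 u])))
    · -- the catcher y would be exactly at p v
      have hz : dd (p y) (p v) = 0 := by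
        rw [dd_sub' (p u) (p y) (p v), ← hye, sub_self, Int.fract_zero]
      have hyv : y = v := h.eq_of_dd hz
      exact hnoedge (Or.inr (hyv ▸ hy.1))
  -- extract a type-B catcher x of v with distance in (δ/2, δ)
  have htEl : ℓ v - dd (p v) (a v) < dd (p u) (p v) := by
    have h1 : ℓ v - dd (p v) (a v) ≤ ff E a ℓ p v := h.ff_ge (Set.mem_insert _ _)
    rcases lt_or_eq_of_le (h1.trans_eq hf') with hlt | heq
    · exact hlt
    · exact absurd heq (hfne _ (Set.mem_insert _ _))
  obtain ⟨e, he, hegt⟩ := h.exists_fSet_gt (θ := max (ℓ v - dd (p v) (a v)) (dd (p u) (p v) / 2))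
    (by rw [hf']; apply max_lt htEl; linarith)
  have hetB : ∃ x, typeB E a p x v ∧ e = dd (p x) (p v) := by
    rcases he with he' | hx
    · exfalso
      rw [he'] at hegt
      exact absurd hegt (not_lt.2 (le_max_left _ _))
    · exact hx
  obtain ⟨x, hxB, hxe⟩ := hetB
  have hγ1 : dd (p u) (p v) / 2 < e := lt_of_le_of_lt (le_max_right _ _) hegt
  have hγ2 : e < dd (p u) (p v) := lt_of_le_of_ne (le_trans (h.ff_ge he) (le_of_eq hf')) (hfne e he)
  -- extract a type-F catcher y of u with distance in (δ - e, δ)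
  have hsEl : dd (p u) (a u) < dd (p u) (p v) := by
    have h1 : dd (p u) (a u) ≤ bb E a p u := h.bb_ge (Set.mem_insert _ _)
    rcases lt_or_eq_of_le (h1.trans_eq hb') with hlt | heq
    · exact hlt
    · exact absurd heq (hbne _ (Set.mem_insert _ _))
  obtain ⟨e', he', hegt'⟩ := h.exists_bSet_gt (θ := max (dd (p u) (a u)) (dd (p u) (p v) - e))
    (by rw [hb']; apply max_lt hsEl; linarith)
  have hetF : ∃ y, typeF E a p y u ∧ e' = dd (p u) (p y) := by
    rcases he' with he'' | hy
    · exfalso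
      rw [he''] at hegt'
      exact absurd hegt' (not_lt.2 (le_max_left _ _))
    · exact hy
  obtain ⟨y, hyF, hye⟩ := hetF
  have hη1 : dd (p u) (p v) - e < e' := lt_of_le_of_lt (le_max_right _ _) hegt'
  have hη2 : e' < dd (p u) (p v) := lt_of_le_of_ne (le_trans (h.bb_ge he') (le_of_eq hb')) (hbne e' he')
  -- position of y relative to v
  have hyv : dd (p y) (p v) = dd (p u) (p v) - e' := by
    rw [dd_sub' (p u) (p y) (p v), ← hye]
    exact fract_eval_lo (by linarith) (by linarith)
  -- mutual edges between x and y : contradiction with orientation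
  have hxy_d : dd (p x) (p y) = e - (dd (p u) (p v) - e') := by
    rw [dd_sub (p x) (p v) (p y), ← hxe, hyv]
    exact fract_eval_lo (by linarith) (by linarith)
  have hxy_pos : 0 < dd (p x) (p y) := by rw [hxy_d]; linarith
  -- x catches y
  have hαx := h.E_mem hxB.1
  have hπx := h.hp x
  have hγd := h.typeB_dist hxB
  rw [← hxe] at hγd
  have hmem1 : dd (p y) (a x) = dd (p y) (p v) + dd (p v) (a x) := by
    apply dd_comp_lo
    rw [hyv]
    have hlx1 := h.hlt x
    linarith
  have hExy : E x y := by
    apply h.memE (Rep.ne_of_dd_pos hxy_pos)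
    rw [hmem1, hyv]
    linarith
  -- y catches x
  have hρy := h.E_mem hyF.1
  have hπy := h.hp y
  have he'd := h.typeF_dist hyF
  rw [← hye] at he'd
  have hmem2 : dd (p x) (a y) = dd (p x) (p y) + dd (p y) (a y) := by
    apply dd_comp_lo
    rw [hxy_d]
    have hly1 := h.hlt y
    linarith
  have hEyx : E y x := by
    apply h.memE (Rep.ne_of_dd_pos hxy_pos).symm
    rw [hmem2, hxy_d]
    linarith
  exact h.hor x y hExy hEyx

end Rep5
end Stmt4Aux
namespace Stmt4Aux
section Rep6
variable {V : Type*} {E : V → V → Prop} {a ℓ p : V → ℝ}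

/-- forward reach monotonicity: a vertex strictly inside the forward reach of `v`
has forward reach extending at least to the reach of `v`. -/
lemma Rep.reach_mono_f (h : Rep E a ℓ p) {u v : V} (hne : u ≠ v)
    (hlt : dd (p u) (p v) < ff E a ℓ p v) :
    ff E a ℓ p v - dd (p u) (p v) ≤ ff E a ℓ p u := by
  have hδ0 : 0 < dd (p u) (p v) := h.dist_pos hne
  have key : ∀ e ∈ fSet E a ℓ p v, e ≤ ff E a ℓ p u + dd (p u) (p v) := by
    intro e he
    rcases le_or_gt e (dd (p u) (p v)) with hle | hgt
    · linarith [h.ff_nonneg u]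
    rcases he with he' | ⟨x, hx, hxe⟩
    · -- end-of-arc candidate
      have he2 : e = ℓ v - dd (p v) (a v) := he'
      have hπv0 := dd_nonneg (p v) (a v)
      have hπv := h.hp v
      have hlv1 := h.hlt v
      -- v catches u ahead of its point
      have hmemvu : dd (p u) (a v) = dd (p u) (p v) + dd (p v) (a v) :=
        dd_comp_lo (by linarith)
      have hEvu : E v u := h.memE hne.symm (by rw [hmemvu]; linarith)
      have hnEuv : ¬ E u v := h.hor v u hEvu
      have hnm : ℓ u < dd (p v) (a u) := h.notMem hne hnEuv
      rcases le_or_gt (dd (p u) (a u)) (dd (p u) (a v)) with hcase | hcase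
      · -- `a u` lies between `a v` and `p u`; use properness of the original arcs
        have hau : dd (a u) (a v) = dd (p u) (a v) - dd (p u) (a u) :=
          dd_sub'_lo hcase
        have hnsub : ¬ (arcSet (a u) (ℓ u) ⊆ arcSet (a v) (ℓ v)) := by
          intro hsub
          exact h.hprop u v ((Set.ssubset_iff_of_subset hsub).2
            ⟨p v, h.hp v, fun hm => absurd (mem_arcSet_iff.1 hm) (not_le.2 hnm)⟩)
        have hgtsub : ℓ v < dd (a u) (a v) + ℓ u := by
          by_contra hle2; push_neg at hle2
          exact hnsub (arc_subset (h.l0 u) hle2)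
        -- conclude from the end-of-arc candidate of u
        have h1 : ℓ u - dd (p u) (a u) ≤ ff E a ℓ p u := h.ff_ge (Set.mem_insert _ _)
        rw [hau, hmemvu] at hgtsub
        linarith
      · -- otherwise `p v ∈ I_u`, contradicting orientation
        exfalso
        have hrev : dd (p v) (p u) = 1 - dd (p u) (p v) := dd_rev (ne_of_gt hδ0)
        have hm2 : dd (p v) (a u) = dd (p v) (p u) + dd (p u) (a u) - 1 := by
          apply dd_comp_hi
          rw [hrev, hmemvu] at *
          linarith [dd_nonneg (p v) (a v)]
        rw [hm2, hrev] at hnm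
        have := h.hp u
        apply hnEuv
        apply h.memE hne
        rw [hm2, hrev]
        rw [hmemvu] at hcase
        linarith [h.hp u]
    · -- catcher candidate: x also catches u from behind
      have hαx := h.E_mem hx.1
      have hπx := h.hp x
      have hlx1 := h.hlt x
      have hd := h.typeB_dist hx
      rw [← hxe] at hd
      have hm : dd (p u) (a x) = dd (p u) (p v) + dd (p v) (a x) :=
        dd_comp_lo (by linarith)
      have hpos : 0 < dd (p x) (p u) := by
        rw [dd_sub_lo (z := p u) (by rw [hm]; linarith : dd (p u) (a x) ≤ dd (p x) (a x)), hm]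
        linarith
      have hExu : E x u := h.memE (Rep.ne_of_dd_pos hpos) (by rw [hm]; linarith)
      have hBxu : typeB E a p x u := ⟨hExu, by rw [hm]; linarith⟩
      have hel : dd (p x) (p u) ≤ ff E a ℓ p u :=
        h.ff_ge (Set.mem_insert_iff.2 (Or.inr ⟨x, hBxu, rfl⟩))
      have hdxu : dd (p x) (p u) = e - dd (p u) (p v) := by
        rw [dd_sub_lo (z := p u) (by rw [hm]; linarith : dd (p u) (a x) ≤ dd (p x) (a x)), hm]
        linarith
      rw [hdxu] at hel
      linarith
  have hsup : ff E a ℓ p v ≤ ff E a ℓ p u + dd (p u) (p v) :=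
    csSup_le (fSet_nonempty v) key
  linarith

/-- backward reach monotonicity. -/
lemma Rep.reach_mono_b (h : Rep E a ℓ p) {u v : V} (hne : v ≠ u)
    (hlt : dd (p v) (p u) < bb E a p v) :
    bb E a p v - dd (p v) (p u) ≤ bb E a p u := by
  have hδ0 : 0 < dd (p v) (p u) := h.dist_pos hne
  have key : ∀ e ∈ bSet E a p v, e ≤ bb E a p u + dd (p v) (p u) := by
    intro e he
    rcases le_or_gt e (dd (p v) (p u)) with hle | hgt
    · linarith [h.bb_nonneg u]
    rcases he with he' | ⟨y, hy, hye⟩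
    · -- start-of-arc candidate
      have he2 : e = dd (p v) (a v) := he'
      have hπv := h.hp v
      have hlv1 := h.hlt v
      rcases le_or_gt (dd (p v) (a v) - dd (p v) (p u)) (dd (p u) (a u)) with hcase | hcase
      · -- direct: the start candidate of u suffices
        have h1 : dd (p u) (a u) ≤ bb E a p u := h.bb_ge (Set.mem_insert _ _)
        linarith
      · -- otherwise derive a contradiction with properness / orientation
        exfalso
        have hmemvu : dd (p u) (a v) = dd (p v) (a v) - dd (p v) (p u) :=
          dd_sub'_lo (by linarith)
        have hEvu : E v u := h.memE hne (by rw [hmemvu]; linarith)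
        have hnEuv : ¬ E u v := h.hor v u hEvu
        have hnm : ℓ u < dd (p v) (a u) := h.notMem hne.symm hnEuv
        have hau : dd (a u) (a v) = dd (p u) (a v) - dd (p u) (a u) :=
          dd_sub'_lo (by rw [hmemvu]; linarith)
        have hnsub : ¬ (arcSet (a u) (ℓ u) ⊆ arcSet (a v) (ℓ v)) := by
          intro hsub
          exact h.hprop u v ((Set.ssubset_iff_of_subset hsub).2
            ⟨p v, h.hp v, fun hm => absurd (mem_arcSet_iff.1 hm) (not_le.2 hnm)⟩)
        have hgtsub : ℓ v < dd (a u) (a v) + ℓ u := by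
          by_contra hle2; push_neg at hle2
          exact hnsub (arc_subset (h.l0 u) hle2)
        rw [hau, hmemvu] at hgtsub
        -- now `ℓ u` is long enough that `p v ∈ I_u`
        have hm2 : dd (p v) (a u) = dd (p v) (p u) + dd (p u) (a u) :=
          dd_comp_lo (by linarith [h.hlt u])
        apply hnEuv
        apply h.memE hne.symm
        rw [hm2]
        linarith
    · -- catcher candidate: y also catches u ahead of its point
      have hρy := h.E_mem hy.1
      have hπy := h.hp y
      have hπy0 := dd_nonneg (p y) (a y)
      have hly1 := h.hlt y
      have hd := h.typeF_dist hy
      rw [← hye] at hd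
      have hm : dd (p u) (a y) = dd (p v) (a y) - dd (p v) (p u) :=
        dd_sub'_lo (by linarith)
      have hpos : 0 < dd (p u) (p y) := by
        rw [dd_sub_lo (z := p y) (by rw [hm]; linarith : dd (p y) (a y) ≤ dd (p u) (a y)), hm]
        linarith
      have hEyu : E y u := h.memE (Rep.ne_of_dd_pos hpos).symm (by rw [hm]; linarith)
      have hFyu : typeF E a p y u := ⟨hEyu, by rw [hm]; linarith⟩
      have hel : dd (p u) (p y) ≤ bb E a p u :=
        h.bb_ge (Set.mem_insert_iff.2 (Or.inr ⟨y, hFyu, rfl⟩))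
      have hdud : dd (p u) (p y) = e - dd (p v) (p u) := by
        rw [dd_sub_lo (z := p y) (by rw [hm]; linarith : dd (p y) (a y) ≤ dd (p u) (a y)), hm]
        linarith
      rw [hdud] at hel
      linarith
  have hsup : bb E a p v ≤ bb E a p u + dd (p v) (p u) :=
    csSup_le (bSet_nonempty v) key
  linarith

end Rep6
end Stmt4Aux
namespace Stmt4Aux
section Rep7
variable {V : Type*} {E : V → V → Prop} {a ℓ p : V → ℝ}

/-- the two reaches of a vertex cannot both be the full circle. -/
lemma Rep.sum_lt_two (h : Rep E a ℓ p) (v : V) : bb E a p v + ff E a ℓ p v < 2 := by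
  by_contra hc; push_neg at hc
  have hf1 : ff E a ℓ p v = 1 := le_antisymm (h.ff_le_one v) (by linarith [h.bb_le_one v])
  have hb1 : bb E a p v = 1 := le_antisymm (h.bb_le_one v) (by linarith [h.ff_le_one v])
  have htEl : ℓ v - dd (p v) (a v) < 1 := by linarith [dd_nonneg (p v) (a v), h.hlt v]
  obtain ⟨e, he, hegt⟩ := h.exists_fSet_gt (θ := max (ℓ v - dd (p v) (a v)) (1/2))
    (by rw [hf1]; exact max_lt htEl (by norm_num))
  have hetB : ∃ x, typeB E a p x v ∧ e = dd (p x) (p v) := by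
    rcases he with he' | hx
    · exfalso; rw [he'] at hegt; exact absurd hegt (not_lt.2 (le_max_left _ _))
    · exact hx
  obtain ⟨x, hxB, hxe⟩ := hetB
  have hγ1 : 1/2 < e := lt_of_le_of_lt (le_max_right _ _) hegt
  have hγ2 : e < 1 := by rw [hxe]; exact dd_lt_one _ _
  have hsEl : dd (p v) (a v) < 1 := dd_lt_one _ _
  obtain ⟨e', he', hegt'⟩ := h.exists_bSet_gt (θ := max (dd (p v) (a v)) (1 - e))
    (by rw [hb1]; exact max_lt hsEl (by linarith))
  have hetF : ∃ y, typeF E a p y v ∧ e' = dd (p v) (p y) := by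
    rcases he' with he'' | hy
    · exfalso; rw [he''] at hegt'; exact absurd hegt' (not_lt.2 (le_max_left _ _))
    · exact hy
  obtain ⟨y, hyF, hye⟩ := hetF
  have hη1 : 1 - e < e' := lt_of_le_of_lt (le_max_right _ _) hegt'
  have hη2 : e' < 1 := by rw [hye]; exact dd_lt_one _ _
  have he'0 : 0 < e' := by linarith
  have hyv : dd (p y) (p v) = 1 - e' := by
    rw [hye] at he'0 ⊢
    exact dd_rev (ne_of_gt he'0)
  have hxy : dd (p x) (p y) = e - (1 - e') := by
    rw [dd_sub (p x) (p v) (p y), ← hxe, hyv]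
    exact fract_eval_lo (by linarith) (by linarith)
  have hxy_pos : 0 < dd (p x) (p y) := by rw [hxy]; linarith
  have hαx := h.E_mem hxB.1
  have hπx := h.hp x
  have hlx1 := h.hlt x
  have hd := h.typeB_dist hxB
  rw [← hxe] at hd
  have hmem1 : dd (p y) (a x) = dd (p y) (p v) + dd (p v) (a x) := by
    apply dd_comp_lo; rw [hyv]; linarith
  have hExy : E x y := h.memE (Rep.ne_of_dd_pos hxy_pos) (by rw [hmem1, hyv]; linarith)
  have hρy := h.E_mem hyF.1
  have hπy := h.hp y
  have hly1 := h.hlt y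
  have hd' := h.typeF_dist hyF
  rw [← hye] at hd'
  have hmem2 : dd (p x) (a y) = dd (p x) (p y) + dd (p y) (a y) := by
    apply dd_comp_lo; rw [hxy]; linarith
  have hEyx : E y x := h.memE (Rep.ne_of_dd_pos hxy_pos).symm (by rw [hmem2, hxy]; linarith)
  exact h.hor x y hExy hEyx

end Rep7
end Stmt4Aux
namespace Stmt4Aux
section Rep8
variable {V : Type*}

lemma fract_eval_neg {t : ℝ} (h0 : -1 ≤ t) (h1 : t < 0) : Int.fract t = t + 1 := by
  have h : Int.fract (t + (1:ℤ)) = Int.fract t := Int.fract_add_intCast t 1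
  rw [← h]; push_cast
  exact fract_eval_lo (by linarith) (by linarith)

lemma dd_shift (x y s t : ℝ) : dd (x - s) (y - t) = Int.fract (dd x y + (t - s)) := by
  have h : dd x y + (t - s) = ((x - s) - (y - t)) - ((⌊x - y⌋ : ℤ) : ℝ) := by
    simp only [dd, Int.fract]; push_cast; ring
  rw [h, Int.fract_sub_intCast]; rfl

variable (E : V → V → Prop) (a ℓ p : V → ℝ)

/-- final arc starts and lengths -/
noncomputable def AA (v : V) : ℝ := p v - bb E a p v / 2
noncomputable def LL (v : V) : ℝ := (bb E a p v + ff E a ℓ p v) / 2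

variable {E a ℓ p}

lemma dd_AA (u v : V) :
    dd (AA E a p u) (AA E a p v)
      = Int.fract (dd (p u) (p v) + (bb E a p v - bb E a p u) / 2) := by
  rw [AA, AA, dd_shift]
  ring_nf

lemma Rep.LL_nonneg (h : Rep E a ℓ p) (v : V) : 0 ≤ LL E a ℓ p v := by
  rw [LL]; linarith [h.bb_nonneg v, h.ff_nonneg v]

lemma Rep.LL_lt_one (h : Rep E a ℓ p) (v : V) : LL E a ℓ p v < 1 := by
  rw [LL]; linarith [h.sum_lt_two v]

/-- edges give intersecting final arcs. -/
lemma Rep.inter_of_bucket (h : Rep E a ℓ p) {u v : V} (hne : u ≠ v)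
    (h1 : dd (p u) (p v) ≤ ff E a ℓ p v) (h2 : dd (p u) (p v) ≤ bb E a p u) :
    (arcSet (AA E a p u) (LL E a ℓ p u) ∩ arcSet (AA E a p v) (LL E a ℓ p v)).Nonempty := by
  rw [arc_inter_nonempty_iff (h.LL_nonneg u) (h.LL_nonneg v)]
  have hδ0 : 0 < dd (p u) (p v) := h.dist_pos hne
  have hδ1 : dd (p u) (p v) < 1 := dd_lt_one _ _
  have hrev : dd (p v) (p u) = 1 - dd (p u) (p v) := dd_rev (ne_of_gt hδ0)
  have hbu0 := h.bb_nonneg u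
  have hbv0 := h.bb_nonneg v
  have hbu1 := h.bb_le_one u
  have hbv1 := h.bb_le_one v
  have hfu0 := h.ff_nonneg u
  have hfv0 := h.ff_nonneg v
  rcases lt_or_ge (dd (p u) (p v) + (bb E a p v - bb E a p u) / 2) 0 with hw | hw
  · left
    rw [dd_AA, hrev, LL,
      fract_eval_hi (by linarith) (by linarith)]
    linarith
  · rcases lt_or_ge (dd (p u) (p v) + (bb E a p v - bb E a p u) / 2) 1 with hw1 | hw1
    · right
      rw [dd_AA, LL, fract_eval_lo hw hw1]
      linarith
    · right
      rw [dd_AA, LL, fract_eval_hi hw1 (by linarith)]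
      linarith

/-- non-adjacent vertices give disjoint final arcs (one side). -/
lemma Rep.no_cross (h : Rep E a ℓ p) {u v : V} (hne : u ≠ v)
    (h1 : ff E a ℓ p v + bb E a p u < 2 * dd (p u) (p v))
    (h2 : ff E a ℓ p u + bb E a p v < 2 * dd (p v) (p u)) :
    ¬ dd (AA E a p u) (AA E a p v) ≤ LL E a ℓ p v := by
  intro hc
  rw [dd_AA, LL] at hc
  have hδ0 : 0 < dd (p u) (p v) := h.dist_pos hne
  have hδ1 : dd (p u) (p v) < 1 := dd_lt_one _ _
  have hrev : dd (p v) (p u) = 1 - dd (p u) (p v) := dd_rev (ne_of_gt hδ0)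
  have hbu0 := h.bb_nonneg u
  have hbv0 := h.bb_nonneg v
  have hbu1 := h.bb_le_one u
  have hbv1 := h.bb_le_one v
  have hfu0 := h.ff_nonneg u
  rw [hrev] at h2
  rcases lt_or_ge (dd (p u) (p v) + (bb E a p v - bb E a p u) / 2) 0 with hw | hw
  · rw [fract_eval_neg (by linarith) hw] at hc
    linarith
  · rcases lt_or_ge (dd (p u) (p v) + (bb E a p v - bb E a p u) / 2) 1 with hw1 | hw1
    · rw [fract_eval_lo hw hw1] at hc
      linarith
    · linarith

/-- properness of the final arcs. -/
lemma Rep.proper (h : Rep E a ℓ p) (u v : V) :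
    ¬ arcSet (AA E a p u) (LL E a ℓ p u) ⊂ arcSet (AA E a p v) (LL E a ℓ p v) := by
  intro hss
  by_cases hne : u = v
  · subst hne
    exact (lt_irrefl _ hss)
  · have hle : dd (AA E a p u) (AA E a p v) + LL E a ℓ p u ≤ LL E a ℓ p v :=
      arc_subset_le (h.LL_nonneg u) (h.LL_lt_one u) (h.LL_lt_one v) hss.subset
    rw [dd_AA, LL, LL] at hle
    have hδ0 : 0 < dd (p u) (p v) := h.dist_pos hne
    have hδ1 : dd (p u) (p v) < 1 := dd_lt_one _ _
    have hrev : dd (p v) (p u) = 1 - dd (p u) (p v) := dd_rev (ne_of_gt hδ0)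
    have hbu0 := h.bb_nonneg u
    have hbv0 := h.bb_nonneg v
    have hbu1 := h.bb_le_one u
    have hbv1 := h.bb_le_one v
    have hfu0 := h.ff_nonneg u
    have hfv1 := h.ff_le_one v
    rcases lt_or_ge (dd (p u) (p v) + (bb E a p v - bb E a p u) / 2) 0 with hw | hw
    · rw [fract_eval_neg (by linarith) hw] at hle
      linarith
    · rcases lt_or_ge (dd (p u) (p v) + (bb E a p v - bb E a p u) / 2) 1 with hw1 | hw1
      · rw [fract_eval_lo hw hw1] at hle
        -- then ff u ≤ ff v - 2δ, contradicting forward reach monotonicity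
        have hlt : dd (p u) (p v) < ff E a ℓ p v := by linarith
        have hm := h.reach_mono_f hne hlt
        linarith
      · rw [fract_eval_hi hw1 (by linarith)] at hle
        -- then bb v ≥ bb u + 2δ', contradicting backward reach monotonicity
        have hδ'0 : 0 < dd (p v) (p u) := by rw [hrev]; linarith
        have hlt : dd (p v) (p u) < bb E a p v := by rw [hrev]; linarith
        have hm := h.reach_mono_b (fun hvu => hne hvu.symm) hlt
        rw [hrev] at hm
        linarith

end Rep8
end Stmt4Aux

open Stmt4Aux in
/-- the underlying undirected graph of an oriented proper
circular-arc catch digraph is a proper circular-arc graph. -/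
theorem stmt_4 {V : Type*} (E : V → V → Prop)
    (hirr : ∀ v, ¬ E v v) (horient : Oriented E)
    (hcatch : IsProperCACatchDigraph E) :
    ∃ a ℓ : V → ℝ,
      (∀ u v : V, ¬ arcSet (a u) (ℓ u) ⊂ arcSet (a v) (ℓ v)) ∧
      ∀ u v : V, u ≠ v →
        ((E u v ∨ E v u) ↔
          (arcSet (a u) (ℓ u) ∩ arcSet (a v) (ℓ v)).Nonempty) := by
  classical
  obtain ⟨a₀, ℓ₀, p₀, hp₀, hprop₀, hE₀⟩ := hcatch
  by_cases hdeg : ∀ v, ℓ₀ v < 1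
  · -- main case: honest lengths
    have h : Rep E a₀ ℓ₀ p₀ :=
      ⟨fun v => hp₀ v, hdeg, hprop₀, fun u v => hE₀ u v, fun u v => horient u v⟩
    refine ⟨AA E a₀ p₀, LL E a₀ ℓ₀ p₀, h.proper, ?_⟩
    intro u v hne
    constructor
    · rintro (he | he)
      · rcases h.bucket he with ⟨h1, h2⟩ | ⟨h1, h2⟩
        · exact h.inter_of_bucket hne h1 h2
        · obtain ⟨x, hx1, hx2⟩ := h.inter_of_bucket hne.symm h2 h1
          exact ⟨x, hx2, hx1⟩
      · rcases h.bucket he with ⟨h1, h2⟩ | ⟨h1, h2⟩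
        · obtain ⟨x, hx1, hx2⟩ := h.inter_of_bucket hne.symm h1 h2
          exact ⟨x, hx2, hx1⟩
        · exact h.inter_of_bucket hne h2 h1
    · intro hnon
      by_contra hno
      push_neg at hno
      obtain ⟨hn1, hn2⟩ := hno
      have s1 := h.nonedge_reach hne hn1 hn2
      have s2 := h.nonedge_reach hne.symm hn2 hn1
      rw [arc_inter_nonempty_iff (h.LL_nonneg u) (h.LL_nonneg v)] at hnon
      rcases hnon with hc | hc
      · exact h.no_cross hne.symm s2 s1 hc
      · exact h.no_cross hne s1 s2 hc
  · -- degenerate case: some arc is the whole circle, so V has at most one point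
    push_neg at hdeg
    obtain ⟨v₀, hv₀⟩ := hdeg
    have huniv : ∀ u : V, 1 ≤ ℓ₀ u := by
      intro u
      by_contra hu; push_neg at hu
      have hv₀univ : arcSet (a₀ v₀) (ℓ₀ v₀) = Set.univ := by
        ext x
        simp only [Set.mem_univ, iff_true]
        exact le_trans (le_of_lt (Int.fract_lt_one _)) hv₀
      apply hprop₀ u v₀
      rw [hv₀univ, Set.ssubset_univ_iff]
      intro hequniv
      have hmem : (a₀ u + (max (ℓ₀ u) 0 + 1)/2) ∈ arcSet (a₀ u) (ℓ₀ u) := by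
        rw [hequniv]; exact Set.mem_univ _
      have hmax0 : (0:ℝ) ≤ max (ℓ₀ u) 0 := le_max_right _ _
      have hmax1 : max (ℓ₀ u) 0 < 1 := max_lt hu one_pos
      have hmaxl : ℓ₀ u ≤ max (ℓ₀ u) 0 := le_max_left _ _
      have hval : Int.fract ((a₀ u + (max (ℓ₀ u) 0 + 1)/2) - a₀ u)
          = (max (ℓ₀ u) 0 + 1)/2 := by
        rw [show (a₀ u + (max (ℓ₀ u) 0 + 1)/2) - a₀ u = (max (ℓ₀ u) 0 + 1)/2 by ring]
        exact fract_eval_lo (by linarith) (by linarith)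
      have hle : (max (ℓ₀ u) 0 + 1)/2 ≤ ℓ₀ u := by
        rw [← hval]; exact hmem
      linarith
    have hall : ∀ u w : V, u = w := by
      intro u w
      by_contra hnw
      have h1 : E u w := (hE₀ u w).2
        ⟨hnw, le_trans (le_of_lt (Int.fract_lt_one _)) (huniv u)⟩
      have h2 : E w u := (hE₀ w u).2
        ⟨Ne.symm hnw, le_trans (le_of_lt (Int.fract_lt_one _)) (huniv w)⟩
      exact horient u w h1 h2
    refine ⟨fun _ => 0, fun _ => 0, ?_, ?_⟩
    · intro u v
      have huv := hall u v
      subst huv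
      exact fun hss => lt_irrefl _ hss
    · intro u v hne
      exact absurd (hall u v) hne
end

section
/- Let G be a circular-arc catch digraph that is a tournament and contains a directed 3-cycle on vertices v_1, v_2, v_3 (with arcs represented by circular arcs I_1, I_2, I_3 and points p_1, p_2, p_3). Then I_1 ∪ I_2 ∪ I_3 covers the entire circle; in particular, G contains no vertex whose outneighborhood includes all of v_1, v_2, v_3 with no edge back (i.e., G does not contain the digraph D_3 consisting of a directed 3-cycle plus a vertex dominating all three cycle vertices as an induced subdigraph). -/
lemma fract_fract_add (u v : ℝ) :
    Int.fract (Int.fract u + Int.fract v) = Int.fract (u + v) := by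
  have h : Int.fract u + Int.fract v = u + v - ((⌊u⌋ + ⌊v⌋ : ℤ) : ℝ) := by
    rw [Int.fract, Int.fract]; push_cast; ring
  rw [h, Int.fract_sub_intCast]

lemma key (ℓ s q : ℝ) (hs0 : 0 ≤ s) (hs1 : ℓ < s) (hs2 : s < 1)
    (hq0 : 0 ≤ q) (hq1 : q < 1) :
    Int.fract (q + s) ≤ ℓ ↔ (1 - s ≤ q ∧ q + s - 1 ≤ ℓ) := by
  by_cases h : 1 ≤ q + s
  · have he : Int.fract (q + s) = q + s - 1 := by
      have h1 : Int.fract (q + s - ((1:ℤ):ℝ)) = Int.fract (q + s) := Int.fract_sub_intCast _ _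
      have h2 : Int.fract (q + s - ((1:ℤ):ℝ)) = q + s - ((1:ℤ):ℝ) :=
        Int.fract_eq_self.mpr ⟨by push_cast; linarith, by push_cast; linarith⟩
      rw [← h1, h2]; push_cast; ring
    rw [he]
    exact ⟨fun hh => ⟨by linarith, by linarith⟩, fun hh => by linarith [hh.2]⟩
  · push_neg at h
    have he : Int.fract (q + s) = q + s :=
      Int.fract_eq_self.mpr ⟨by linarith, h⟩
    rw [he]
    constructor
    · intro hh; linarith
    · intro hh; linarith [hh.1]

/-- in a circular-arc catch tournament, the arcs of a directed
3-cycle cover the whole circle; in particular no vertex dominates all three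
cycle vertices (so the digraph D_3 is not an induced subdigraph). -/
theorem stmt_10 {V : Type*} (E : V → V → Prop)
    (a ℓ p : V → ℝ)
    (hpt : ∀ v, arcMem (a v) (ℓ v) (p v))
    (hedge : ∀ u v, E u v ↔ u ≠ v ∧ arcMem (a u) (ℓ u) (p v))
    (hirr : ∀ v, ¬ E v v)
    (htour : ∀ u v : V, u ≠ v → (E u v ↔ ¬ E v u))
    (v1 v2 v3 : V)
    (h12 : E v1 v2) (h23 : E v2 v3) (h31 : E v3 v1) :
    (∀ x : ℝ, arcMem (a v1) (ℓ v1) x ∨ arcMem (a v2) (ℓ v2) x ∨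
       arcMem (a v3) (ℓ v3) x) ∧
    ¬ ∃ w : V, w ≠ v1 ∧ w ≠ v2 ∧ w ≠ v3 ∧ E w v1 ∧ E w v2 ∧ E w v3 := by
  have d12 : v1 ≠ v2 := ((hedge _ _).mp h12).1
  have d23 : v2 ≠ v3 := ((hedge _ _).mp h23).1
  have d31 : v3 ≠ v1 := ((hedge _ _).mp h31).1
  -- memberships
  have m12 : arcMem (a v1) (ℓ v1) (p v2) := ((hedge _ _).mp h12).2
  have m23 : arcMem (a v2) (ℓ v2) (p v3) := ((hedge _ _).mp h23).2
  have m31 : arcMem (a v3) (ℓ v3) (p v1) := ((hedge _ _).mp h31).2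
  -- non-memberships
  have n21 : ¬ arcMem (a v2) (ℓ v2) (p v1) := fun h =>
    ((htour v1 v2 d12).mp h12) ((hedge v2 v1).mpr ⟨d12.symm, h⟩)
  have n32 : ¬ arcMem (a v3) (ℓ v3) (p v2) := fun h =>
    ((htour v2 v3 d23).mp h23) ((hedge v3 v2).mpr ⟨d23.symm, h⟩)
  have n13 : ¬ arcMem (a v1) (ℓ v1) (p v3) := fun h =>
    ((htour v3 v1 d31).mp h31) ((hedge v1 v3).mpr ⟨d31.symm, h⟩)
  have cover : ∀ x : ℝ, arcMem (a v1) (ℓ v1) x ∨ arcMem (a v2) (ℓ v2) x ∨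
      arcMem (a v3) (ℓ v3) x := by
    intro x
    by_contra hx
    push_neg at hx
    obtain ⟨hx1, hx2, hx3⟩ := hx
    unfold arcMem at *
    set s1 := Int.fract (x - a v1) with hs1def
    set s2 := Int.fract (x - a v2) with hs2def
    set s3 := Int.fract (x - a v3) with hs3def
    set q1 := Int.fract (p v1 - x) with hq1def
    set q2 := Int.fract (p v2 - x) with hq2def
    set q3 := Int.fract (p v3 - x) with hq3def
    push_neg at hx1 hx2 hx3
    have key' : ∀ (i j : V), Int.fract (p j - a i) = Int.fract (Int.fract (p j - x) + Int.fract (x - a i)) := by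
      intro i j
      rw [fract_fract_add]
      ring_nf
    have tr : ∀ (i j : V), ℓ i < Int.fract (x - a i) →
        (Int.fract (p j - a i) ≤ ℓ i ↔
          (1 - Int.fract (x - a i) ≤ Int.fract (p j - x) ∧
           Int.fract (p j - x) + Int.fract (x - a i) - 1 ≤ ℓ i)) := by
      intro i j hlt
      rw [key' i j]
      exact key (ℓ i) (Int.fract (x - a i)) (Int.fract (p j - x))
        (Int.fract_nonneg _) hlt (Int.fract_lt_one _)
        (Int.fract_nonneg _) (Int.fract_lt_one _)
    -- translate the nine facts
    have M11 := (tr v1 v1 hx1).mp (hpt v1)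
    have M22 := (tr v2 v2 hx2).mp (hpt v2)
    have M33 := (tr v3 v3 hx3).mp (hpt v3)
    have M12 := (tr v1 v2 hx1).mp m12
    have M23 := (tr v2 v3 hx2).mp m23
    have M31 := (tr v3 v1 hx3).mp m31
    have N21 := (tr v2 v1 hx2).not.mp n21
    have N32 := (tr v3 v2 hx3).not.mp n32
    have N13 := (tr v1 v3 hx1).not.mp n13
    rw [not_and_or] at N21 N32 N13
    push_neg at N21 N32 N13
    rcases le_total q1 q2 with o12 | o12 <;>
      rcases le_total q2 q3 with o23 | o23 <;>
        rcases le_total q1 q3 with o13 | o13 <;>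
          rcases N21 with N21 | N21 <;>
            rcases N32 with N32 | N32 <;>
              rcases N13 with N13 | N13 <;>
    simp only [← hs1def, ← hs2def, ← hs3def, ← hq1def, ← hq2def, ← hq3def] at * <;>
    linarith [M11.1, M11.2, M22.1, M22.2, M33.1, M33.2, M12.1, M12.2,
      M23.1, M23.2, M31.1, M31.2]
  refine ⟨cover, ?_⟩
  rintro ⟨w, hw1, hw2, hw3, e1, e2, e3⟩
  have nw1 : ¬ arcMem (a v1) (ℓ v1) (p w) := fun h =>
    ((htour w v1 hw1).mp e1) ((hedge v1 w).mpr ⟨hw1.symm, h⟩)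
  have nw2 : ¬ arcMem (a v2) (ℓ v2) (p w) := fun h =>
    ((htour w v2 hw2).mp e2) ((hedge v2 w).mpr ⟨hw2.symm, h⟩)
  have nw3 : ¬ arcMem (a v3) (ℓ v3) (p w) := fun h =>
    ((htour w v3 hw3).mp e3) ((hedge v3 w).mpr ⟨hw3.symm, h⟩)
  rcases cover (p w) with h | h | h
  exacts [nw1 h, nw2 h, nw3 h]
end

section
/- Let G be a tournament in which every 3-cycle of the underlying complete graph is transitively oriented (i.e., G is a transitive-triangle tournament containing no directed 3-cycle). Then G contains no diasteroidal triple, and consequently G is an interval catch digraph (hence also a circular-arc catch digraph). -/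
/-- A chain: consecutive vertices are joined by an edge in some direction. -/
def ChainList {V : Type*} (E : V → V → Prop) (l : List V) : Prop :=
  l.Chain' (fun x y => E x y ∨ E y x)

/-- The chain is avoided by a vertex: no initial endpoint of an arc of the
chain is an inneighbour of that vertex. -/
def AvoidsChain {V : Type*} (E : V → V → Prop) (z : V) (l : List V) : Prop :=
  ∀ (i : ℕ) (x y : V), l[i]? = some x → l[i+1]? = some y →
    (E x y → ¬ E x z) ∧ (E y x → ¬ E y z)

/-- Diasteroidal triple: for each of the three vertices there is a chain
between the other two which it avoids. -/
def DTriple {V : Type*} (E : V → V → Prop) (x y z : V) : Prop :=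
  x ≠ y ∧ y ≠ z ∧ x ≠ z ∧
  (∃ l : List V, l.head? = some y ∧ l.getLast? = some z ∧
      ChainList E l ∧ AvoidsChain E x l) ∧
  (∃ l : List V, l.head? = some x ∧ l.getLast? = some z ∧
      ChainList E l ∧ AvoidsChain E y l) ∧
  (∃ l : List V, l.head? = some x ∧ l.getLast? = some y ∧
      ChainList E l ∧ AvoidsChain E z l)

/-- Interval catch digraph: intervals on the real line with a marked point. -/
def IsIntervalCatchDigraph {V : Type*} (E : V → V → Prop) : Prop :=
  ∃ a b p : V → ℝ, (∀ v, a v ≤ p v ∧ p v ≤ b v) ∧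
    ∀ u v, E u v ↔ u ≠ v ∧ a u ≤ p v ∧ p v ≤ b u

/-!
A tournament without directed 3-cycles is a strict order, so it is the order of its
out-degrees: `u → v` iff `u ≠ v` and the out-degree of `v` is at most that of `u`.
The intervals `[0, outdeg v]` with marked points `outdeg v` therefore represent it,
and squeezing the line into `(0, 1)` turns intervals into circular arcs.
No diasteroidal triple exists because the head of a chain cannot beat a vertex that
avoids the chain; applied to two vertices `x ≠ y` of a triple, neither beats the other.
-/

open Finset

section Tournament

variable {V : Type*} {E : V → V → Prop}

theorem isStrictOrder_of_not_exists_cycle3 (htour : ∀ u v : V, u ≠ v → (E u v ↔ ¬ E v u))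
    (hno3 : ¬ ∃ a b c : V, E a b ∧ E b c ∧ E c a) : IsStrictOrder V E := by
  have hirr (v : V) : ¬ E v v := fun hv => hno3 ⟨v, v, v, hv, hv, hv⟩
  refine { irrefl := hirr, trans := fun a b c hab hbc => ?_ }
  by_contra hac
  have hca : a ≠ c := by
    rintro rfl
    exact (htour a b fun h => hirr a (h ▸ hab)).mp hab hbc
  exact hno3 ⟨a, b, c, hab, hbc, (htour c a hca.symm).mpr hac⟩

theorem not_adj_head_of_avoidsChain [IsTrans V E] {x y w : V} {t : List V}
    (hchain : ChainList E (y :: w :: t)) (havoid : AvoidsChain E x (y :: w :: t)) :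
    ¬ E y x := by
  have hx := havoid 0 y w rfl rfl
  rcases (List.isChain_cons_cons.mp hchain).1 with hyw | hwy
  · exact hx.1 hyw
  · exact fun hyx => hx.2 hwy (trans_of E hwy hyx)

theorem List.exists_eq_cons_cons_of_head?_of_getLast? {y z : V} {l : List V}
    (hhead : l.head? = some y) (hlast : l.getLast? = some z) (hyz : y ≠ z) :
    ∃ w t, l = y :: w :: t := by
  match l, hhead, hlast with
  | [_], rfl, hlast => exact absurd (Option.some_injective _ hlast) hyz
  | _ :: w :: t, rfl, _ => exact ⟨w, t, rfl⟩

theorem not_dTriple [IsTrans V E] (htour : ∀ u v : V, u ≠ v → (E u v ↔ ¬ E v u)) (x y z : V) :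
    ¬ DTriple E x y z := by
  rintro ⟨hxy, hyz, hxz, ⟨l₁, h₁, h₁', hc₁, ha₁⟩, ⟨l₂, h₂, h₂', hc₂, ha₂⟩, -⟩
  obtain ⟨w₁, t₁, rfl⟩ := List.exists_eq_cons_cons_of_head?_of_getLast? h₁ h₁' hyz
  obtain ⟨w₂, t₂, rfl⟩ := List.exists_eq_cons_cons_of_head?_of_getLast? h₂ h₂' hxz
  exact not_adj_head_of_avoidsChain hc₂ ha₂ ((htour x y hxy).mpr (not_adj_head_of_avoidsChain hc₁ ha₁))

variable [Fintype V] [DecidableRel E]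

def outDegree (E : V → V → Prop) [DecidableRel E] (v : V) : ℕ := #{u | E v u}

theorem outDegree_lt_of_adj [IsStrictOrder V E] {u v : V} (huv : E u v) :
    outDegree E v < outDegree E u := by
  refine card_lt_card ((ssubset_iff_of_subset fun w hw => ?_).mpr ⟨v, ?_, ?_⟩)
  · simp only [mem_filter, mem_univ, true_and] at hw ⊢
    exact trans_of E huv hw
  · simpa using huv
  · simpa using irrefl_of E v

theorem adj_iff_outDegree_le [IsStrictOrder V E] (htour : ∀ u v : V, u ≠ v → (E u v ↔ ¬ E v u))
    (u v : V) : E u v ↔ u ≠ v ∧ outDegree E v ≤ outDegree E u := by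
  refine ⟨fun huv => ⟨ne_of_irrefl huv, (outDegree_lt_of_adj huv).le⟩, ?_⟩
  rintro ⟨huv, hle⟩
  by_contra h
  exact hle.not_gt (outDegree_lt_of_adj ((htour v u huv.symm).mpr h))

end Tournament

theorem isIntervalCatchDigraph_of_adj_iff_le {V : Type*} {E : V → V → Prop} (r : V → ℕ)
    (hr : ∀ u v, E u v ↔ u ≠ v ∧ r v ≤ r u) : IsIntervalCatchDigraph E := by
  refine ⟨fun _ => 0, fun v => r v, fun v => r v, fun v => ⟨Nat.cast_nonneg _, le_rfl⟩,
    fun u v => ?_⟩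
  simp [hr, Nat.cast_le]

theorem arcMem_sub_iff {a b x : ℝ} (ha₀ : 0 ≤ a) (ha₁ : a < 1) (hb : b < 1) (hx₀ : 0 ≤ x)
    (hx₁ : x < 1) : arcMem a (b - a) x ↔ a ≤ x ∧ x ≤ b := by
  unfold arcMem
  by_cases hax : a ≤ x
  · rw [Int.fract_eq_self.mpr ⟨by linarith, by linarith⟩]
    exact ⟨fun h => ⟨hax, by linarith⟩, fun h => by linarith [h.2]⟩
  · rw [← Int.fract_add_one, Int.fract_eq_self.mpr ⟨by linarith, by linarith⟩]
    exact ⟨fun h => by linarith, fun h => absurd h.1 hax⟩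

theorem IsIntervalCatchDigraph.isCACatchDigraph {V : Type*} {E : V → V → Prop}
    (hE : IsIntervalCatchDigraph E) : IsCACatchDigraph E := by
  obtain ⟨a, b, p, hap, hE⟩ := hE
  have hsig {s t : ℝ} (w : ℝ) : arcMem (Real.sigmoid s) (Real.sigmoid t - Real.sigmoid s)
      (Real.sigmoid w) ↔ s ≤ w ∧ w ≤ t := by
    rw [arcMem_sub_iff (Real.sigmoid_nonneg s) (Real.sigmoid_lt_one s) (Real.sigmoid_lt_one t)
      (Real.sigmoid_nonneg w) (Real.sigmoid_lt_one w), Real.sigmoid_le_iff, Real.sigmoid_le_iff]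
  refine ⟨fun v => Real.sigmoid (a v), fun v => Real.sigmoid (b v) - Real.sigmoid (a v),
    fun v => Real.sigmoid (p v), fun v => (hsig _).mpr (hap v), fun u v => ?_⟩
  rw [hE, hsig]

theorem stmt_11_general {V : Type*} [Fintype V] (E : V → V → Prop)
    (htour : ∀ u v : V, u ≠ v → (E u v ↔ ¬ E v u))
    (hno3 : ¬ ∃ a b c : V, E a b ∧ E b c ∧ E c a) :
    (¬ ∃ x y z : V, DTriple E x y z) ∧
    IsIntervalCatchDigraph E ∧ IsCACatchDigraph E := by
  classical
  have := isStrictOrder_of_not_exists_cycle3 htour hno3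
  have hinterval : IsIntervalCatchDigraph E :=
    isIntervalCatchDigraph_of_adj_iff_le _ (adj_iff_outDegree_le htour)
  exact ⟨fun ⟨x, y, z, h⟩ => not_dTriple htour x y z h, hinterval, hinterval.isCACatchDigraph⟩

/-- a tournament with no directed 3-cycle has no diasteroidal
triple, hence is an interval catch digraph (and a circular-arc catch
digraph). -/
theorem stmt_11 {V : Type*} [Fintype V] (E : V → V → Prop)
    (hirr : ∀ v, ¬ E v v)
    (htour : ∀ u v : V, u ≠ v → (E u v ↔ ¬ E v u))
    (hno3 : ¬ ∃ a b c : V, E a b ∧ E b c ∧ E c a) :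
    (¬ ∃ x y z : V, DTriple E x y z) ∧
    IsIntervalCatchDigraph E ∧ IsCACatchDigraph E :=
  stmt_11_general E htour hno3
end

section
/- If a digraph G is a proper circular-arc catch digraph, then its augmented adjacency matrix can be brought by independent row and column permutations to a matrix B satisfying: (1) B has the circular ones property along both rows and columns; (2) for any two rows r, s of B, the set difference of the circular intervals of ones of r and s is again a circular interval (equivalently, no row's circular stretch of ones is properly contained in another's when both are nontrivial); and (3) for any full row r and any two nontrivial rows s, t, the set r − s − t is a circular interval. -/
/-- The augmented adjacency matrix of a digraph, with rows and columns
independently permuted. -/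
def AugM {V : Type*} {n : ℕ} (E : V → V → Prop) (ρ γ : Fin n ≃ V)
    (i j : Fin n) : Prop :=
  E (ρ i) (γ j) ∨ ρ i = γ j

/-- The three matrix conditions: circular ones along rows and columns; the
difference of the one-blocks of any two rows is a circular interval; and for
any full row r and nontrivial rows s, t the set r - s - t is a circular
interval. -/
def MatCond {n : ℕ} (B : Fin n → Fin n → Prop) : Prop :=
  (∀ i, CircBlock {j | B i j}) ∧
  (∀ j, CircBlock {i | B i j}) ∧
  (∀ r s, CircBlock {j | B r j ∧ ¬ B s j}) ∧
  (∀ r s t, (∀ j, B r j) →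
     (∃ j, B s j) → (∃ j, ¬ B s j) → (∃ j, B t j) → (∃ j, ¬ B t j) →
     CircBlock {j | B r j ∧ ¬ B s j ∧ ¬ B t j})


/-!
Sort the columns by the positions of the points `p v` on the circle, and the rows by the
reversed starting points `-a v`. Measuring the columns by clockwise distance from a point `c`
makes them increasing after a cyclic shift of indices, so a set of columns is a cyclic block
as soon as, in this coordinate, no column outside it lies between two columns inside it.
For rows, `r - s` and `r - s - t`, take `c` to be the start of the arc of `r`, in whose
coordinate that arc is `[0, ℓ]`. An arc `s` not contained in `r` has a point beyond `ℓ`, and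
being connected it can only reach the part of `r` lying before or after all the points of
`r` that it misses. For a column `x`, measure each row by the distance from the start of its
arc forward to `x`: an arc through `x` starting farther back than an arc missing `x` would
properly contain it, so the rows whose arcs contain `x` are the nearest ones.
-/

section Fract

variable {R : Type*} [CommRing R] [LinearOrder R] [IsStrictOrderedRing R] [FloorRing R]

theorem Int.fract_sub_of_fract_le {s t : R} (h : Int.fract s ≤ Int.fract t) :
    Int.fract (t - s) = Int.fract t - Int.fract s := by
  have := Int.fract_lt_one t; have := Int.fract_nonneg s
  refine Int.fract_eq_iff.mpr ⟨by linarith, by linarith, ⌊t⌋ - ⌊s⌋, ?_⟩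
  simp only [Int.fract]; push_cast; ring

theorem Int.fract_sub_of_fract_lt {s t : R} (h : Int.fract t < Int.fract s) :
    Int.fract (t - s) = Int.fract t - Int.fract s + 1 := by
  have := Int.fract_lt_one s; have := Int.fract_nonneg t
  refine Int.fract_eq_iff.mpr ⟨by linarith, by linarith, ⌊t⌋ - ⌊s⌋ - 1, ?_⟩
  simp only [Int.fract]; push_cast; ring

theorem Int.fract_sub_eq_of_fract_sub_le {s t : R} (a : R)
    (h : Int.fract (s - a) ≤ Int.fract (t - a)) :
    Int.fract (t - s) = Int.fract (t - a) - Int.fract (s - a) := by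
  rw [← sub_sub_sub_cancel_right t s a, Int.fract_sub_of_fract_le h]

theorem Int.fract_sub_eq_of_fract_sub_lt {s t : R} (a : R)
    (h : Int.fract (t - a) < Int.fract (s - a)) :
    Int.fract (t - s) = Int.fract (t - a) - Int.fract (s - a) + 1 := by
  rw [← sub_sub_sub_cancel_right t s a, Int.fract_sub_of_fract_lt h]

end Fract

theorem Fin.sub_le_sub_iff_of_le {n : ℕ} {A B x : Fin n} (hAB : A ≤ B) :
    x - A ≤ B - A ↔ A ≤ x ∧ x ≤ B := by
  have hBA : ((B - A : Fin n) : ℕ) = B - A := Fin.coe_sub_iff_le.mpr hAB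
  rw [Fin.le_def, Fin.le_def, Fin.le_def, hBA]
  rcases le_or_gt A x with hx | hx
  · rw [Fin.coe_sub_iff_le.mpr hx]; rw [Fin.le_def] at hx; omega
  · rw [Fin.coe_sub_iff_lt.mpr hx]; rw [Fin.lt_def] at hx; have := B.isLt; omega

theorem circBlock_of_ordConnected_add {n : ℕ} [NeZero n] {S : Set (Fin n)} (m : Fin n)
    (h : {k | k + m ∈ S}.OrdConnected) : CircBlock S := by
  set T : Set (Fin n) := {k | k + m ∈ S}
  have hmemT : ∀ i, i - m ∈ T ↔ i ∈ S := fun i => by simp [T]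
  rcases T.eq_empty_or_nonempty with hT | hT
  · exact .inl (Set.eq_empty_of_forall_notMem fun i hi => hT.subset ((hmemT i).mpr hi))
  obtain ⟨A, hA, hmin⟩ := T.exists_min_image id T.toFinite hT
  obtain ⟨B, hB, hmax⟩ := T.exists_max_image id T.toFinite hT
  dsimp only [id] at hmin hmax
  refine .inr ⟨A + m, B + m, Set.ext fun i => ?_⟩
  rw [Set.mem_ofPred_eq, show i - (A + m) = i - m - A by abel, show B + m - (A + m) = B - A by abel,
    Fin.sub_le_sub_iff_of_le (hmax A hA), ← hmemT]
  exact ⟨fun hi => ⟨hmin _ hi, hmax _ hi⟩, fun hi => h.out hA hB hi⟩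

theorem exists_monotone_fract_sub_add {n : ℕ} [NeZero n] {q : Fin n → ℝ}
    (hq : Monotone fun m => Int.fract (q m)) (c : ℝ) :
    ∃ m : Fin n, Monotone fun k => Int.fract (q (k + m) - c) := by
  set f := fun m => Int.fract (q m)
  have hf : ∀ m, f m < 1 ∧ 0 ≤ f m := fun m => ⟨Int.fract_lt_one _, Int.fract_nonneg _⟩
  have hle : ∀ m, Int.fract c ≤ f m → Int.fract (q m - c) = f m - Int.fract c :=
    fun m => Int.fract_sub_of_fract_le
  have hlt : ∀ m, f m < Int.fract c → Int.fract (q m - c) = f m - Int.fract c + 1 :=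
    fun m => Int.fract_sub_of_fract_lt
  by_cases hex : ∃ m, Int.fract c ≤ f m
  swap
  · push Not at hex
    refine ⟨0, fun k₁ k₂ hk => ?_⟩
    simp only [add_zero, hlt _ (hex _)]
    linarith [hq hk]
  -- `m` is the first index whose point lies at or after `c`: there the circle is cut.
  obtain ⟨m, hm, hmin⟩ := Set.exists_min_image {m | Int.fract c ≤ f m} id (Set.toFinite _) hex
  have hval : ∀ k : Fin n, Int.fract (q (k + m) - c) =
      f (k + m) - Int.fract c + if n ≤ (k : ℕ) + m then 1 else 0 := by
    intro k
    split_ifs with hk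
    · have hkm : k + m < m := by rw [Fin.lt_def, Fin.val_add_eq_ite, if_pos hk]; omega
      rw [hlt _ (lt_of_not_ge fun h => (hmin _ h).not_gt hkm)]
    · have hkm : m ≤ k + m := by rw [Fin.le_def, Fin.val_add_eq_ite, if_neg hk]; omega
      rw [hle _ (hm.trans (hq hkm)), add_zero]
  refine ⟨m, fun k₁ k₂ hk => ?_⟩
  have hk' : (k₁ : ℕ) ≤ k₂ := hk
  have hmono : (n ≤ (k₁ : ℕ) + m ↔ n ≤ (k₂ : ℕ) + m) → f (k₁ + m) ≤ f (k₂ + m) := fun h =>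
    hq (by rw [Fin.le_def, Fin.val_add_eq_ite, Fin.val_add_eq_ite]; split_ifs <;> omega)
  simp only [hval]
  by_cases h₁ : n ≤ (k₁ : ℕ) + m <;> by_cases h₂ : n ≤ (k₂ : ℕ) + m <;>
    simp only [h₁, h₂, if_true, if_false]
  · linarith [hmono (iff_of_true h₁ h₂)]
  · omega
  · linarith [hf (k₁ + m), hf (k₂ + m)]
  · linarith [hmono (iff_of_false h₁ h₂)]

theorem circBlock_of_forall_notMem_Icc {n : ℕ} {q : Fin n → ℝ}
    (hq : Monotone fun m => Int.fract (q m)) (c : ℝ) {S : Set (Fin n)}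
    (hS : ∀ i ∈ S, ∀ k ∈ S, ∀ j ∉ S,
      Int.fract (q j - c) ∉ Set.Icc (Int.fract (q i - c)) (Int.fract (q k - c))) :
    CircBlock S := by
  rcases S.eq_empty_or_nonempty with hS₀ | ⟨i₀, -⟩
  · exact .inl hS₀
  have : NeZero n := ⟨i₀.pos.ne'⟩
  obtain ⟨m, hm⟩ := exists_monotone_fract_sub_add hq c
  refine circBlock_of_ordConnected_add m ⟨fun i hi k hk j hj => ?_⟩
  by_contra hjS
  exact hS _ hi _ hk _ hjS ⟨hm hj.1, hm hj.2⟩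

theorem arcSet_subset_arcSet {a ℓ a' ℓ' : ℝ} (h : Int.fract (a - a') + ℓ ≤ ℓ') :
    arcSet a ℓ ⊆ arcSet a' ℓ' := fun y (hy : Int.fract (y - a) ≤ ℓ) =>
  show Int.fract (y - a') ≤ ℓ' from
  calc Int.fract (y - a') = Int.fract ((y - a) + (a - a')) := by ring_nf
    _ ≤ Int.fract (y - a) + Int.fract (a - a') := Int.fract_add_le _ _
    _ ≤ ℓ' := by linarith

theorem arcMem_segment_or {a ℓ x y : ℝ} (hx : arcMem a ℓ x) (hy : arcMem a ℓ y) :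
    (∀ z, Int.fract (z - x) ≤ Int.fract (y - x) → arcMem a ℓ z) ∨
      (∀ z, Int.fract (z - y) ≤ Int.fract (x - y) → arcMem a ℓ z) := by
  have key : ∀ u v, arcMem a ℓ v → Int.fract (u - a) ≤ Int.fract (v - a) →
      ∀ z, Int.fract (z - u) ≤ Int.fract (v - u) → arcMem a ℓ z := by
    intro u v (hv : Int.fract (v - a) ≤ ℓ) huv z hz
    have hvu := Int.fract_sub_eq_of_fract_sub_le a huv
    show Int.fract (z - a) ≤ ℓ
    calc Int.fract (z - a) = Int.fract ((z - u) + (u - a)) := by ring_nf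
      _ ≤ Int.fract (z - u) + Int.fract (u - a) := Int.fract_add_le _ _
      _ ≤ ℓ := by linarith
  rcases le_total (Int.fract (x - a)) (Int.fract (y - a)) with h | h
  · exact .inl (key x y hy h)
  · exact .inr (key y x hx h)

theorem fract_sub_notMem_Icc_of_arcMem {aR ℓR aS ℓS t t₁ t₃ y : ℝ}
    (hyS : arcMem aS ℓS y) (hyR : ¬ arcMem aR ℓR y)
    (h₁R : arcMem aR ℓR t₁) (h₁S : ¬ arcMem aS ℓS t₁)
    (h₃R : arcMem aR ℓR t₃) (h₃S : ¬ arcMem aS ℓS t₃) (htS : arcMem aS ℓS t) :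
    Int.fract (t - aR) ∉ Set.Icc (Int.fract (t₁ - aR)) (Int.fract (t₃ - aR)) := by
  rintro ⟨h₁, h₃⟩
  have hy : ℓR < Int.fract (y - aR) := not_le.mp hyR
  have h₁' : Int.fract (t₁ - aR) ≤ ℓR := h₁R
  have h₃' : Int.fract (t₃ - aR) ≤ ℓR := h₃R
  rcases arcMem_segment_or htS hyS with hseg | hseg
  · refine h₃S (hseg t₃ ?_)
    rw [Int.fract_sub_eq_of_fract_sub_le aR h₃,
      Int.fract_sub_eq_of_fract_sub_le (s := t) (t := y) aR (by linarith)]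
    linarith
  · refine h₁S (hseg t₁ ?_)
    rw [Int.fract_sub_eq_of_fract_sub_lt (s := y) (t := t₁) aR (by linarith),
      Int.fract_sub_eq_of_fract_sub_lt (s := y) (t := t) aR (by linarith)]
    linarith

theorem fract_sub_lt_of_arcMem_of_not_arcMem {aU ℓU aW ℓW x : ℝ}
    (hprop : ¬ arcSet aW ℓW ⊂ arcSet aU ℓU) (hU : arcMem aU ℓU x) (hW : ¬ arcMem aW ℓW x) :
    Int.fract (x - aU) < Int.fract (x - aW) := by
  by_contra! hle
  have hU' : Int.fract (x - aU) ≤ ℓU := hU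
  have hW' : ℓW < Int.fract (x - aW) := not_le.mp hW
  have hstart : Int.fract (aW - aU) = Int.fract (x - aU) - Int.fract (x - aW) := by
    rw [show aW - aU = (x - aU) - (x - aW) by ring, Int.fract_sub_of_fract_le hle]
  exact hprop ((arcSet_subset_arcSet (by linarith)).ssubset_of_mem_notMem hU hW)

section ArcMatrix

variable {n : ℕ} {a ℓ p : Fin n → ℝ}

theorem circBlock_arcMem_row (hp : Monotone fun j => Int.fract (p j)) (r : Fin n) :
    CircBlock {j | arcMem (a r) (ℓ r) (p j)} :=
  circBlock_of_forall_notMem_Icc hp (a r) fun _ _ _ hk _ hj hjk => hj (hjk.2.trans hk)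

theorem circBlock_arcMem_col (ha : Monotone fun i => Int.fract (-a i))
    (hprop : ∀ u w, ¬ arcSet (a u) (ℓ u) ⊂ arcSet (a w) (ℓ w)) (j : Fin n) :
    CircBlock {i | arcMem (a i) (ℓ i) (p j)} := by
  refine circBlock_of_forall_notMem_Icc ha (-p j) fun _ _ k hk l hl hlk => ?_
  simp only [neg_sub_neg] at hlk
  exact (fract_sub_lt_of_arcMem_of_not_arcMem (hprop l k) hk hl).not_ge hlk.2

theorem circBlock_arcMem_sdiff (hp : Monotone fun j => Int.fract (p j)) {r s : Fin n}
    (hsr : ¬ arcSet (a s) (ℓ s) ⊂ arcSet (a r) (ℓ r)) :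
    CircBlock {j | arcMem (a r) (ℓ r) (p j) ∧ ¬ arcMem (a s) (ℓ s) (p j)} := by
  refine circBlock_of_forall_notMem_Icc hp (a r) fun i hi k hk j hj hjik => ?_
  obtain ⟨y, hyS, hyR⟩ :=
    Set.not_subset.mp fun hsub => hsr (hsub.ssubset_of_mem_notMem hi.1 hi.2)
  by_cases hjR : arcMem (a r) (ℓ r) (p j)
  · exact fract_sub_notMem_Icc_of_arcMem hyS hyR hi.1 hi.2 hk.1 hk.2
      (not_not.mp fun hjS => hj ⟨hjR, hjS⟩) hjik
  · exact hjR (hjik.2.trans hk.1)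

theorem circBlock_arcMem_sdiff_sdiff (hp : Monotone fun j => Int.fract (p j)) {r s t : Fin n}
    (hsr : ¬ arcSet (a s) (ℓ s) ⊂ arcSet (a r) (ℓ r))
    (htr : ¬ arcSet (a t) (ℓ t) ⊂ arcSet (a r) (ℓ r)) (hr : ∀ j, arcMem (a r) (ℓ r) (p j))
    (hs : ∃ j, ¬ arcMem (a s) (ℓ s) (p j)) (ht : ∃ j, ¬ arcMem (a t) (ℓ t) (p j)) :
    CircBlock {j | arcMem (a r) (ℓ r) (p j) ∧ ¬ arcMem (a s) (ℓ s) (p j) ∧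
      ¬ arcMem (a t) (ℓ t) (p j)} := by
  have hexit : ∀ {a' ℓ'}, ¬ arcSet a' ℓ' ⊂ arcSet (a r) (ℓ r) → (∃ j, ¬ arcMem a' ℓ' (p j)) →
      ∃ y, arcMem a' ℓ' y ∧ ¬ arcMem (a r) (ℓ r) y := fun hprop ⟨j, hj⟩ =>
    Set.not_subset.mp fun hsub => hprop (hsub.ssubset_of_mem_notMem (hr j) hj)
  obtain ⟨ys, hysS, hysR⟩ := hexit hsr hs
  obtain ⟨yt, hytT, hytR⟩ := hexit htr ht
  refine circBlock_of_forall_notMem_Icc hp (a r) fun i hi k hk j hj => ?_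
  have hjST : arcMem (a s) (ℓ s) (p j) ∨ arcMem (a t) (ℓ t) (p j) := by
    by_contra! h
    exact hj ⟨hr j, h⟩
  rcases hjST with hjS | hjT
  · exact fract_sub_notMem_Icc_of_arcMem hysS hysR hi.1 hi.2.1 hk.1 hk.2.1 hjS
  · exact fract_sub_notMem_Icc_of_arcMem hytT hytR hi.1 hi.2.2 hk.1 hk.2.2 hjT

theorem matCond_arcMem (hp : Monotone fun j => Int.fract (p j))
    (ha : Monotone fun i => Int.fract (-a i))
    (hprop : ∀ u w, ¬ arcSet (a u) (ℓ u) ⊂ arcSet (a w) (ℓ w)) :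
    MatCond fun i j => arcMem (a i) (ℓ i) (p j) :=
  ⟨circBlock_arcMem_row hp, circBlock_arcMem_col ha hprop,
    fun r s => circBlock_arcMem_sdiff hp (hprop s r),
    fun r s t hr _ hs _ ht => circBlock_arcMem_sdiff_sdiff hp (hprop s r) (hprop t r) hr hs ht⟩

end ArcMatrix

theorem stmt_13_general {V : Type*} [Fintype V] (E : V → V → Prop)
    (h : IsProperCACatchDigraph E) :
    ∃ ρ γ : Fin (Fintype.card V) ≃ V, MatCond (AugM E ρ γ) := by
  obtain ⟨a, ℓ, p, hp, hprop, hE⟩ := h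
  have hadj : ∀ u v, E u v ∨ u = v ↔ arcMem (a u) (ℓ u) (p v) := fun u v => by
    rw [hE]
    by_cases huv : u = v <;> simp [huv, hp]
  let e : Fin (Fintype.card V) ≃ V := (Fintype.equivFin V).symm
  let ρ := (Tuple.sort fun i => Int.fract (-a (e i))).trans e
  let γ := (Tuple.sort fun j => Int.fract (p (e j))).trans e
  refine ⟨ρ, γ, ?_⟩
  have hAug : AugM E ρ γ = fun i j => arcMem (a (ρ i)) (ℓ (ρ i)) (p (γ j)) :=
    funext₂ fun _ _ => propext (hadj _ _)
  rw [hAug]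
  exact matCond_arcMem (Tuple.monotone_sort fun j => Int.fract (p (e j)))
    (Tuple.monotone_sort fun i => Int.fract (-a (e i))) fun _ _ => hprop _ _

/-- the augmented adjacency matrix of a proper circular-arc catch
digraph can be brought, by independent row and column permutations, to a matrix
satisfying the three conditions. -/
theorem stmt_13 {V : Type*} [Fintype V] (E : V → V → Prop)
    (hirr : ∀ v, ¬ E v v)
    (h : IsProperCACatchDigraph E) :
    ∃ ρ γ : Fin (Fintype.card V) ≃ V, MatCond (AugM E ρ γ) :=
  stmt_13_general E h
end
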